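/- arXiv:2307.12829 — 9 statements merged into one kernel-verified Lean document; each statement's English description precedes it below -/
import Mathlib

section
/- Let q be a power of 2, let F be a finite field with q^6 elements, and let c ∈ F. If F1(c) = 0, F2(c) = 0 and F3(c) ≠ 0, then c^{q^3} ≠ c (that is, c does not belong to the subfield 𝔽_{q^3} of F). -/
noncomputable section

def F1 (q : ℕ) {F : Type*} [Field F] (c : F) : F :=
  c ^ (q ^ 4 + 2 * q ^ 3 + q ^ 2 + q + 1) + c ^ (q ^ 4 + q ^ 3 + q ^ 2 + 1)
    + c ^ (q ^ 3 + q + 1) + c + c ^ (2 * q ^ 3 + q ^ 2 + q) + c ^ (q ^ 3 + q ^ 2 + q)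
    + c ^ (q ^ 3) + 1

def F2 (q : ℕ) {F : Type*} [Field F] (c : F) : F :=
  c ^ (q ^ 3 + q ^ 2 + 2 * q + 2) + c ^ (q ^ 2 + q + 2) + c ^ (q ^ 3 + 2 * q ^ 2 + 2 * q + 1)
    + c ^ (2 * q ^ 3 + 2 * q ^ 2 + q + 1) + c ^ (q ^ 2 + q + 1) + c ^ (q ^ 3 + q + 1)
    + c ^ (q ^ 3 + q ^ 2 + 1) + c + c ^ (2 * q ^ 3 + q ^ 2 + q) + c ^ (q ^ 3 + q ^ 2 + q)
    + c ^ (q ^ 3) + 1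

def F3 (q : ℕ) {F : Type*} [Field F] (c : F) : F := c ^ (q ^ 2 + q + 1) + 1

def F4 (q : ℕ) {F : Type*} [Field F] (c : F) : F :=
  c ^ (2 * q ^ 2 + q + 4) + c ^ (3 * q ^ 2 + 2 * q + 3) + c ^ (q ^ 2 + 2 * q + 3)
    + c ^ (3 * q ^ 2 + q + 3) + c ^ (q ^ 2 + q + 3) + c ^ (2 * q ^ 2 + 3) + c ^ (q ^ 2 + 3)
    + c ^ (4 * q ^ 2 + q + 2) + c ^ (q + 2) + c ^ (3 * q ^ 2 + 2) + c ^ 2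
    + c ^ (3 * q ^ 2 + 2 * q + 1) + c ^ (q ^ 2 + 2 * q + 1) + c ^ (3 * q ^ 2 + q + 1)
    + c ^ (q ^ 2 + q + 1) + c ^ (3 * q ^ 2 + 1) + c + c ^ (2 * q ^ 2 + q) + c ^ (2 * q ^ 2)
    + c ^ (q ^ 2)

def F5 (q : ℕ) {F : Type*} [Field F] (c : F) : F :=
  c ^ (2 * q ^ 2 + q + 2) + c ^ (q ^ 2 + q + 2) + c ^ (2 * q ^ 2 + 2)
    + c ^ (2 * q ^ 2 + q + 1) + c ^ (q ^ 2 + q + 1) + 1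

def frakC (q : ℕ) (F : Type*) [Field F] : Set F :=
  {c | c ^ (q ^ 2) ≠ c ∧ F1 q c = 0 ∧ F2 q c = 0 ∧ F3 q c * F4 q c * F5 q c ≠ 0}

def IsScattered (q : ℕ) {F : Type*} [Field F] (f : F → F) : Prop :=
  ∀ y z : F, y ≠ 0 → z ≠ 0 → f y * z = f z * y → ∃ l : F, l ^ q = l ∧ y = l * z

theorem statement3 (e q : ℕ) (he : 1 ≤ e) (hq : q = 2 ^ e)
    (F : Type) [Field F] [Fintype F] (hF : Fintype.card F = q ^ 6)
    (c : F) (h1 : F1 q c = 0) (h2 : F2 q c = 0) (h3 : F3 q c ≠ 0) :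
    c ^ (q ^ 3) ≠ c := by
  simp only [F1] at h1
  simp only [F2] at h2
  simp only [F3] at h3
  intro hc
  -- q ≥ 2, q ≠ 0
  have hq0 : q ≠ 0 := by rw [hq]; positivity
  -- characteristic 2
  obtain ⟨p, hp⟩ := CharP.exists F
  haveI := hp
  have hprime : p.Prime := CharP.char_is_prime F p
  obtain ⟨n, hn, hcard⟩ := FiniteField.card F p
  have hpq : p = 2 := by
    have hdvd : p ∣ 2 ^ (e * 6) := by
      have : (p : ℕ) ^ (n : ℕ) = 2 ^ (e * 6) := by
        rw [← hcard, hF, hq, ← pow_mul]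
      exact this ▸ dvd_pow_self p n.ne_zero
    have := hprime.dvd_of_dvd_pow hdvd
    exact (Nat.prime_dvd_prime_iff_eq hprime Nat.prime_two).mp this
  subst hpq
  have h2z : (2 : F) = 0 := by exact_mod_cast CharP.cast_eq_zero F 2
  -- c ≠ 0
  have hc0 : c ≠ 0 := by
    rintro rfl
    rw [zero_pow (by simp [Nat.add_eq_zero, pow_eq_zero_iff, hq0]),
      zero_pow (by simp [Nat.add_eq_zero, pow_eq_zero_iff, hq0]),
      zero_pow (by simp [Nat.add_eq_zero, pow_eq_zero_iff, hq0]),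
      zero_pow (by simp [Nat.add_eq_zero, pow_eq_zero_iff, hq0]),
      zero_pow (by simp [Nat.add_eq_zero, pow_eq_zero_iff, hq0]),
      zero_pow (pow_ne_zero _ hq0)] at h1
    simp at h1
  -- basic power identities
  have hq4 : c ^ (q ^ 4) = c ^ q := by
    rw [pow_succ, pow_mul, hc]
  -- split sums
  simp only [two_mul, pow_add, pow_one, hq4, hc] at h1 h2
  set v := c ^ q with hvdef
  set w := c ^ (q ^ 2) with hwdef
  have hw_vq : v ^ q = w := by
    rw [hvdef, ← pow_mul, ← pow_two]
  have h3' : c * v * w + 1 ≠ 0 := by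
    intro h; apply h3
    rw [pow_add, pow_add, pow_one]
    linear_combination h
  have fact1 : (c ^ 2 * v + 1) * (c * v * w + 1) = 0 := by
    linear_combination h1 - (c ^ 2 * v * w + c) * h2z
  have hl : c ^ 2 * v + 1 = 0 := by
    rcases mul_eq_zero.mp fact1 with h | h
    · exact h
    · exact absurd h h3'
  have hv : c ^ 2 * v = 1 := by linear_combination hl - h2z
  have hv2 : c ^ 4 * v ^ 2 = 1 := by linear_combination (c ^ 2 * v + 1) * hv
  have hvq : v ^ 2 * w = 1 := by
    have h := congrArg (fun x => x ^ q) hv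
    simp only [mul_pow, one_pow] at h
    rw [← pow_mul, mul_comm 2 q, pow_mul, hw_vq] at h
    exact h
  have hw : w = c ^ 4 := by
    calc w = 1 * w := (one_mul w).symm
    _ = (c ^ 4 * v ^ 2) * w := by rw [hv2]
    _ = c ^ 4 * (v ^ 2 * w) := by ring
    _ = c ^ 4 := by rw [hvq, mul_one]
  rw [hw] at h2
  have key : c ^ 13 + c ^ 7 = 0 := by
    linear_combination c ^ 4 * h2
      - ((c ^ 7 + c ^ 10) * (c ^ 2 * v + 1) + 2 * c ^ 8 + c ^ 13 + 2 * c ^ 7 + c ^ 4) * hv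
      - (c ^ 7 + c ^ 8 + c ^ 10 + c ^ 4 + c ^ 5) * h2z
  have hc13 : c ^ 13 = c ^ 7 := by linear_combination key - c ^ 7 * h2z
  have hc6 : c ^ 6 = 1 := by
    have h7 : c ^ 7 ≠ 0 := pow_ne_zero _ hc0
    refine mul_left_cancel₀ h7 ?_
    rw [mul_one, ← pow_add]
    exact hc13
  have hsq : (c ^ 3 - 1) ^ 2 = 0 := by linear_combination hc6 + (1 - c ^ 3) * h2z
  have hc3 : c ^ 3 = 1 := by
    exact sub_eq_zero.mp (pow_eq_zero_iff two_ne_zero |>.mp hsq)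
  exact h3' (by linear_combination c ^ 3 * hv + c * v * hw + hc3 + h2z)
end
end

section
/- Let q be a power of 2, let F be a finite field with q^6 elements, and let b, c ∈ F be nonzero with c ≠ b^{q^2+1}. Then for every s ∈ {1,5}, every field automorphism ρ of F, and all A, B, C, D ∈ F with A·D − B·C ≠ 0, the set {(A·ρ(x) + B·ρ(x)^{q^s}, C·ρ(x) + D·ρ(x)^{q^s}) : x ∈ F} is different from U_{b,c}. (That is, U_{b,c} is not ΓL(2,q^6)-equivalent to the pseudoregulus subspace U^{1,6}_s = {(x, x^{q^s}) : x ∈ F}.) -/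
noncomputable section

section AuxProof

variable {F : Type} [Field F] [Fintype F]

lemma aux_char2 (e q : ℕ) (hq : q = 2 ^ e) (hF : Fintype.card F = q ^ 6) :
    CharP F 2 := by
  haveI := ringChar.charP F
  obtain ⟨n, hp, hcard⟩ := FiniteField.card F (ringChar F)
  have hdvd : ringChar F ∣ 2 ^ (e * 6) := by
    have h1 : ringChar F ∣ Fintype.card F := hcard ▸ dvd_pow_self _ (by positivity)
    rwa [hF, hq, ← pow_mul] at h1
  have h2 : ringChar F = 2 :=
    (Nat.prime_dvd_prime_iff_eq hp Nat.prime_two).mp (hp.dvd_of_dvd_pow hdvd)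
  exact ringChar.of_eq h2

lemma aux_frob_ne (q : ℕ) (hq2 : 2 ≤ q) (hF : Fintype.card F = q ^ 6)
    {d : ℕ} (hd1 : 1 ≤ d) (hd : d < 6) (h : ∀ x : F, x ^ q ^ d = x) : False := by
  classical
  obtain ⟨g, hg⟩ := IsCyclic.exists_generator (α := Fˣ)
  have horder : orderOf g = q ^ 6 - 1 := by
    rw [orderOf_eq_card_of_forall_mem_zpowers hg, Nat.card_eq_fintype_card, Fintype.card_units, hF]
  have hqd2 : 2 ≤ q ^ d := le_trans hq2 (Nat.le_self_pow (by omega) q)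
  have hval : (g : F) ^ (q ^ d - 1) = 1 := by
    have hx := h (g : F)
    have hrw : (g : F) ^ (q ^ d) = (g : F) ^ (q ^ d - 1) * (g : F) := by
      rw [← pow_succ]
      congr 1
      omega
    rw [hrw] at hx
    have hg0 : (g : F) ≠ 0 := Units.ne_zero g
    calc (g : F) ^ (q ^ d - 1) = (g : F) ^ (q ^ d - 1) * (g:F) * (g:F)⁻¹ := by
          field_simp
      _ = (g:F) * (g:F)⁻¹ := by rw [hx]
      _ = 1 := by field_simp
  have hgu : g ^ (q ^ d - 1) = 1 := by
    ext
    push_cast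
    exact hval
  have hdvd := orderOf_dvd_of_pow_eq_one hgu
  rw [horder] at hdvd
  have hle : q ^ 6 - 1 ≤ q ^ d - 1 := Nat.le_of_dvd (by omega) hdvd
  have hlt : q ^ d < q ^ 6 := Nat.pow_lt_pow_right (by omega) hd
  omega

lemma aux_indep (e q : ℕ) (he : 1 ≤ e) (hq : q = 2 ^ e)
    (hF : Fintype.card F = q ^ 6) (a0 a1 a2 a3 a4 a5 : F)
    (h : ∀ u : F, a0 * u + a1 * u ^ q + a2 * u ^ q ^ 2 + a3 * u ^ q ^ 3
      + a4 * u ^ q ^ 4 + a5 * u ^ q ^ 5 = 0) :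
    a0 = 0 ∧ a1 = 0 ∧ a2 = 0 ∧ a3 = 0 ∧ a4 = 0 ∧ a5 = 0 := by
  haveI : CharP F 2 := aux_char2 e q hq hF
  have hq2 : 2 ≤ q := by
    rw [hq]
    calc 2 = 2 ^ 1 := (pow_one 2).symm
      _ ≤ 2 ^ e := Nat.pow_le_pow_right (by norm_num) he
  -- injectivity of Frobenius powers
  have hfrobinj : ∀ (m : ℕ), Function.Injective (fun x : F => x ^ q ^ m) := by
    intro m x y hxy
    simp only at hxy
    have hsub : (x - y) ^ q ^ m = 0 := by
      rw [CharTwo.sub_eq_add]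
      have hadd : (x + y) ^ q ^ m = x ^ q ^ m + y ^ q ^ m := by
        have hqm : q ^ m = 2 ^ (e * m) := by rw [hq, ← pow_mul]
        haveI : Fact (Nat.Prime 2) := ⟨Nat.prime_two⟩
        rw [hqm]
        exact add_pow_char_pow x y 2 (e * m)
      rw [hadd, hxy]
      exact CharTwo.add_self_eq_zero _
    exact sub_eq_zero.mp ((pow_eq_zero_iff (by positivity)).mp hsub)
  have haux_ne : ∀ i j : ℕ, i < j → j < 6 → (∀ x : F, x ^ q ^ i = x ^ q ^ j) → False := by
    intro i j hij hj hx
    refine aux_frob_ne q hq2 hF (d := j - i) (by omega) (by omega) ?_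
    intro x
    apply hfrobinj i
    show (x ^ q ^ (j - i)) ^ q ^ i = x ^ q ^ i
    rw [← pow_mul, ← pow_add, Nat.sub_add_cancel hij.le]
    exact (hx x).symm
  set φ : Fin 6 → (F →* F) := fun i => powMonoidHom (q ^ (i : ℕ)) with hφ
  have hinj : Function.Injective φ := by
    intro i j hij
    have hx : ∀ x : F, x ^ q ^ (i : ℕ) = x ^ q ^ (j : ℕ) := fun x => by
      have := DFunLike.congr_fun hij x
      simpa [hφ, powMonoidHom] using this
    rcases lt_trichotomy (i : ℕ) (j : ℕ) with hlt | heq | hgt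
    · exact absurd (haux_ne i j hlt j.isLt hx) (by simp)
    · exact Fin.ext heq
    · exact absurd (haux_ne j i hgt i.isLt (fun x => (hx x).symm)) (by simp)
  have li : LinearIndependent F (fun i : Fin 6 => ((φ i : F →* F) : F → F)) :=
    (linearIndependent_monoidHom F F).comp φ hinj
  rw [Fintype.linearIndependent_iff] at li
  have hsum : ∑ i : Fin 6, (![a0, a1, a2, a3, a4, a5] i) • ((φ i : F →* F) : F → F) = 0 := by
    funext u
    rw [Finset.sum_apply, Fin.sum_univ_six]
    show a0 * u ^ q ^ 0 + a1 * u ^ q ^ 1 + a2 * u ^ q ^ 2 + a3 * u ^ q ^ 3 + a4 * u ^ q ^ 4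
      + a5 * u ^ q ^ 5 = 0
    simpa using h u
  have := li ![a0, a1, a2, a3, a4, a5] hsum
  exact ⟨this 0, this 1, this 2, this 3, this 4, this 5⟩

end AuxProof

theorem statement4 (e q : ℕ) (he : 1 ≤ e) (hq : q = 2 ^ e)
    (F : Type) [Field F] [Fintype F] (hF : Fintype.card F = q ^ 6)
    (b c : F) (hb : b ≠ 0) (hc : c ≠ 0) (hbc : c ≠ b ^ (q ^ 2 + 1)) :
    ∀ s ∈ ({1, 5} : Set ℕ), ∀ ρ : F ≃+* F, ∀ A B C D : F, A * D - B * C ≠ 0 →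
      {p : F × F | ∃ x : F,
          p = (A * ρ x + B * (ρ x) ^ (q ^ s), C * ρ x + D * (ρ x) ^ (q ^ s))} ≠
        {p : F × F | ∃ x : F, p = (x, x ^ q + b * x ^ (q ^ 3) + c * x ^ (q ^ 5))} := by
  intro s hs ρ A B C D hABCD heq
  haveI hchar : CharP F 2 := aux_char2 e q hq hF
  haveI : Fact (Nat.Prime 2) := ⟨Nat.prime_two⟩
  have h2 : (2 : F) = 0 := CharTwo.two_eq_zero
  have hq2 : 2 ≤ q := by
    rw [hq]
    calc 2 = 2 ^ 1 := (pow_one 2).symm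
      _ ≤ 2 ^ e := Nat.pow_le_pow_right (by norm_num) he
  have hfrobadd : ∀ (x y : F) (k : ℕ), (x + y) ^ q ^ k = x ^ q ^ k + y ^ q ^ k := by
    intro x y k
    have hqk : q ^ k = 2 ^ (e * k) := by rw [hq, ← pow_mul]
    rw [hqk]
    exact add_pow_char_pow x y 2 (e * k)
  have hpow6 : ∀ u : F, u ^ q ^ 6 = u := fun u => by rw [← hF]; exact FiniteField.pow_card u
  -- the key pointwise identity
  have key : ∀ u : F, C * u + D * u ^ q ^ s
      = (A * u + B * u ^ q ^ s) ^ q + b * (A * u + B * u ^ q ^ s) ^ q ^ 3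
        + c * (A * u + B * u ^ q ^ s) ^ q ^ 5 := by
    intro u
    have hm : ((A * ρ (ρ.symm u) + B * (ρ (ρ.symm u)) ^ q ^ s,
        C * ρ (ρ.symm u) + D * (ρ (ρ.symm u)) ^ q ^ s) : F × F) ∈
        {p : F × F | ∃ x : F,
          p = (A * ρ x + B * (ρ x) ^ (q ^ s), C * ρ x + D * (ρ x) ^ (q ^ s))} :=
      ⟨ρ.symm u, rfl⟩
    rw [heq] at hm
    obtain ⟨x, hx⟩ := hm
    rw [RingEquiv.apply_symm_apply, Prod.ext_iff] at hx
    obtain ⟨h1, hx2⟩ := hx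
    simp only at h1 hx2
    rw [← h1] at hx2
    exact hx2
  simp only [Set.mem_insert_iff, Set.mem_singleton_iff] at hs
  rcases hs with rfl | rfl
  · -- s = 1
    simp only [pow_one] at key
    have hzero : ∀ u : F, (C + c * B ^ q ^ 5) * u + (D + A ^ q) * u ^ q + B ^ q * u ^ q ^ 2
        + (b * A ^ q ^ 3) * u ^ q ^ 3 + (b * B ^ q ^ 3) * u ^ q ^ 4
        + (c * A ^ q ^ 5) * u ^ q ^ 5 = 0 := by
      intro u
      have k := key u
      have e1 : (A * u + B * u ^ q) ^ q = A ^ q * u ^ q + B ^ q * u ^ q ^ 2 := by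
        have hh := hfrobadd (A * u) (B * u ^ q) 1
        rw [pow_one] at hh
        rw [hh, mul_pow, mul_pow, ← pow_mul, show q * q = q ^ 2 by ring]
      have e3 : (A * u + B * u ^ q) ^ q ^ 3
          = A ^ q ^ 3 * u ^ q ^ 3 + B ^ q ^ 3 * u ^ q ^ 4 := by
        rw [hfrobadd, mul_pow, mul_pow, ← pow_mul, show q * q ^ 3 = q ^ 4 by ring]
      have e5 : (A * u + B * u ^ q) ^ q ^ 5
          = A ^ q ^ 5 * u ^ q ^ 5 + B ^ q ^ 5 * u := by
        rw [hfrobadd, mul_pow, mul_pow, ← pow_mul, show q * q ^ 5 = q ^ 6 by ring, hpow6]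
      rw [e1, e3, e5] at k
      linear_combination k + (A ^ q * u ^ q + B ^ q * u ^ q ^ 2
        + b * (A ^ q ^ 3 * u ^ q ^ 3 + B ^ q ^ 3 * u ^ q ^ 4)
        + c * (A ^ q ^ 5 * u ^ q ^ 5 + B ^ q ^ 5 * u)) * h2
    obtain ⟨-, -, hB, hA, -, -⟩ := aux_indep e q he hq hF _ _ _ _ _ _ hzero
    have hB0 : B = 0 := by
      have := (pow_eq_zero_iff (n := q) (by omega)).mp hB
      exact this
    have hA0 : A = 0 := by
      rcases mul_eq_zero.mp hA with h | h
      · exact absurd h hb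
      · exact (pow_eq_zero_iff (n := q ^ 3) (by positivity)).mp h
    rw [hA0, hB0] at hABCD
    simp at hABCD
  · -- s = 5
    have hzero : ∀ u : F, (C + B ^ q) * u + A ^ q * u ^ q + (b * B ^ q ^ 3) * u ^ q ^ 2
        + (b * A ^ q ^ 3) * u ^ q ^ 3 + (c * B ^ q ^ 5) * u ^ q ^ 4
        + (D + c * A ^ q ^ 5) * u ^ q ^ 5 = 0 := by
      intro u
      have k := key u
      have e1 : (A * u + B * u ^ q ^ 5) ^ q = A ^ q * u ^ q + B ^ q * u := by
        have hh := hfrobadd (A * u) (B * u ^ q ^ 5) 1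
        rw [pow_one] at hh
        rw [hh, mul_pow, mul_pow, ← pow_mul, show q ^ 5 * q = q ^ 6 by ring, hpow6]
      have e3 : (A * u + B * u ^ q ^ 5) ^ q ^ 3
          = A ^ q ^ 3 * u ^ q ^ 3 + B ^ q ^ 3 * u ^ q ^ 2 := by
        rw [hfrobadd, mul_pow, mul_pow, ← pow_mul, show q ^ 5 * q ^ 3 = q ^ 6 * q ^ 2 by ring,
          pow_mul, hpow6]
      have e5 : (A * u + B * u ^ q ^ 5) ^ q ^ 5
          = A ^ q ^ 5 * u ^ q ^ 5 + B ^ q ^ 5 * u ^ q ^ 4 := by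
        rw [hfrobadd, mul_pow, mul_pow, ← pow_mul, show q ^ 5 * q ^ 5 = q ^ 6 * q ^ 4 by ring,
          pow_mul, hpow6]
      rw [e1, e3, e5] at k
      linear_combination k + (A ^ q * u ^ q + B ^ q * u
        + b * (A ^ q ^ 3 * u ^ q ^ 3 + B ^ q ^ 3 * u ^ q ^ 2)
        + c * (A ^ q ^ 5 * u ^ q ^ 5 + B ^ q ^ 5 * u ^ q ^ 4)) * h2
    obtain ⟨-, hA, hB, -, -, -⟩ := aux_indep e q he hq hF _ _ _ _ _ _ hzero
    have hA0 : A = 0 := (pow_eq_zero_iff (n := q) (by omega)).mp hA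
    have hB0 : B = 0 := by
      rcases mul_eq_zero.mp hB with h | h
      · exact absurd h hb
      · exact (pow_eq_zero_iff (n := q ^ 3) (by positivity)).mp h
    rw [hA0, hB0] at hABCD
    simp at hABCD
end
end

section
/- Let q be a power of 2, let F be a finite field with q^6 elements, and let b, c ∈ F be nonzero with c ≠ b^{q^2+1}. Then for every s ∈ {1,5}, every δ ∈ F with δ^{q^5+q^4+q^3+q^2+q+1} ∉ {0,1}, every field automorphism ρ of F, and all A, B, C, D ∈ F with A·D − B·C ≠ 0, the set {(A·ρ(x) + B·ρ(δ·x^{q^s} + x^{q^{6−s}}), C·ρ(x) + D·ρ(δ·x^{q^s} + x^{q^{6−s}})) : x ∈ F} is different from U_{b,c}. (That is, U_{b,c} is not ΓL(2,q^6)-equivalent to the Lunardon–Polverino subspace U^{2,6}_{s,δ} = {(x, δ·x^{q^s} + x^{q^{6−s}}) : x ∈ F}.) -/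
noncomputable section

open Polynomial in
lemma six_coeffs (q : ℕ) (hq : 2 ≤ q) {F : Type} [Field F] [Fintype F]
    (hF : Fintype.card F = q ^ 6) (a0 a1 a2 a3 a4 a5 : F)
    (h : ∀ y : F, a0 * y + a1 * y ^ q ^ 1 + a2 * y ^ q ^ 2 + a3 * y ^ q ^ 3
      + a4 * y ^ q ^ 4 + a5 * y ^ q ^ 5 = 0) :
    a0 = 0 ∧ a1 = 0 ∧ a2 = 0 ∧ a3 = 0 ∧ a4 = 0 ∧ a5 = 0 := by
  classical
  set P : F[X] := C a0 * X ^ q ^ 0 + C a1 * X ^ q ^ 1 + C a2 * X ^ q ^ 2 + C a3 * X ^ q ^ 3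
    + C a4 * X ^ q ^ 4 + C a5 * X ^ q ^ 5 with hP
  have heval : ∀ y : F, P.eval y = 0 := by
    intro y
    have := h y
    simp only [hP, eval_add, eval_mul, eval_C, eval_pow, eval_X, pow_zero, pow_one] at *
    linear_combination this
  have hterm : ∀ (a : F) (k : ℕ), k ≤ 5 → (C a * X ^ q ^ k : F[X]).natDegree ≤ q ^ 5 := by
    intro a k hk
    refine le_trans (natDegree_C_mul_le _ _) ?_
    rw [natDegree_X_pow]
    exact Nat.pow_le_pow_right (by omega) hk
  have hdeg : P.natDegree ≤ q ^ 5 := by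
    refine natDegree_add_le_of_degree_le (natDegree_add_le_of_degree_le
      (natDegree_add_le_of_degree_le (natDegree_add_le_of_degree_le
      (natDegree_add_le_of_degree_le (hterm _ 0 (by omega)) (hterm _ 1 (by omega)))
      (hterm _ 2 (by omega))) (hterm _ 3 (by omega))) (hterm _ 4 (by omega)))
      (hterm _ 5 (by omega))
  have hP0 : P = 0 := by
    refine eq_zero_of_natDegree_lt_card_of_eval_eq_zero P Function.injective_id
      (fun y => heval y) ?_
    rw [hF]
    exact lt_of_le_of_lt hdeg (Nat.pow_lt_pow_right (by omega) (by omega))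
  have hne : ∀ i j : ℕ, i ≠ j → q ^ i ≠ q ^ j := fun i j hij =>
    fun hc => hij (Nat.pow_right_injective hq hc)
  have hcoeff : ∀ k : ℕ, P.coeff k = 0 := fun k => by rw [hP0]; simp
  refine ⟨?_, ?_, ?_, ?_, ?_, ?_⟩
  · have := hcoeff (q ^ 0)
    simp only [hP, coeff_add, coeff_C_mul, coeff_X_pow, if_pos rfl,
      if_neg (hne 0 1 (by omega)), if_neg (hne 0 2 (by omega)), if_neg (hne 0 3 (by omega)),
      if_neg (hne 0 4 (by omega)), if_neg (hne 0 5 (by omega))] at this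
    simpa using this
  · have := hcoeff (q ^ 1)
    simp only [hP, coeff_add, coeff_C_mul, coeff_X_pow, if_pos rfl,
      if_neg (hne 1 0 (by omega)), if_neg (hne 1 2 (by omega)), if_neg (hne 1 3 (by omega)),
      if_neg (hne 1 4 (by omega)), if_neg (hne 1 5 (by omega))] at this
    simpa using this
  · have := hcoeff (q ^ 2)
    simp only [hP, coeff_add, coeff_C_mul, coeff_X_pow, if_pos rfl,
      if_neg (hne 2 0 (by omega)), if_neg (hne 2 1 (by omega)), if_neg (hne 2 3 (by omega)),
      if_neg (hne 2 4 (by omega)), if_neg (hne 2 5 (by omega))] at this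
    simpa using this
  · have := hcoeff (q ^ 3)
    simp only [hP, coeff_add, coeff_C_mul, coeff_X_pow, if_pos rfl,
      if_neg (hne 3 0 (by omega)), if_neg (hne 3 1 (by omega)), if_neg (hne 3 2 (by omega)),
      if_neg (hne 3 4 (by omega)), if_neg (hne 3 5 (by omega))] at this
    simpa using this
  · have := hcoeff (q ^ 4)
    simp only [hP, coeff_add, coeff_C_mul, coeff_X_pow, if_pos rfl,
      if_neg (hne 4 0 (by omega)), if_neg (hne 4 1 (by omega)), if_neg (hne 4 2 (by omega)),
      if_neg (hne 4 3 (by omega)), if_neg (hne 4 5 (by omega))] at this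
    simpa using this
  · have := hcoeff (q ^ 5)
    simp only [hP, coeff_add, coeff_C_mul, coeff_X_pow, if_pos rfl,
      if_neg (hne 5 0 (by omega)), if_neg (hne 5 1 (by omega)), if_neg (hne 5 2 (by omega)),
      if_neg (hne 5 3 (by omega)), if_neg (hne 5 4 (by omega))] at this
    simpa using this

theorem statement5 (e q : ℕ) (he : 1 ≤ e) (hq : q = 2 ^ e)
    (F : Type) [Field F] [Fintype F] (hF : Fintype.card F = q ^ 6)
    (b c : F) (hb : b ≠ 0) (hc : c ≠ 0) (hbc : c ≠ b ^ (q ^ 2 + 1)) :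
    ∀ s ∈ ({1, 5} : Set ℕ), ∀ δ : F,
      δ ^ (q ^ 5 + q ^ 4 + q ^ 3 + q ^ 2 + q + 1) ≠ 0 →
      δ ^ (q ^ 5 + q ^ 4 + q ^ 3 + q ^ 2 + q + 1) ≠ 1 →
      ∀ ρ : F ≃+* F, ∀ A B C D : F, A * D - B * C ≠ 0 →
        {p : F × F | ∃ x : F,
            p = (A * ρ x + B * ρ (δ * x ^ (q ^ s) + x ^ (q ^ (6 - s))),
              C * ρ x + D * ρ (δ * x ^ (q ^ s) + x ^ (q ^ (6 - s))))} ≠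
          {p : F × F | ∃ x : F, p = (x, x ^ q + b * x ^ (q ^ 3) + c * x ^ (q ^ 5))} := by
  intro s hs δ hδ0 hδ1 ρ A B C D hABCD hset
  have hq2 : 2 ≤ q := by
    subst hq
    calc 2 = 2 ^ 1 := (pow_one 2).symm
    _ ≤ 2 ^ e := Nat.pow_le_pow_right (by omega) he
  have hqpos : 0 < q := by omega
  -- characteristic 2
  haveI hinst : CharP F (ringChar F) := ringChar.charP F
  obtain ⟨n, hprime, hcard⟩ := FiniteField.card F (ringChar F)
  have hchar2 : ringChar F = 2 := by
    have hdvd : ringChar F ∣ 2 ^ (e * 6) := by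
      have : ringChar F ^ (n : ℕ) = 2 ^ (e * 6) := by
        rw [← hcard, hF, hq, ← pow_mul]
      exact this ▸ dvd_pow_self (ringChar F) n.pos.ne'
    exact (Nat.prime_dvd_prime_iff_eq hprime Nat.prime_two).mp
      (hprime.dvd_of_dvd_pow hdvd)
  haveI hC2 : CharP F 2 := ringChar.of_eq hchar2
  haveI : Fact (Nat.Prime 2) := ⟨Nat.prime_two⟩
  -- Frobenius-type identities
  have hadd : ∀ (x y : F) (j : ℕ), (x + y) ^ q ^ j = x ^ q ^ j + y ^ q ^ j := by
    intro x y j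
    have hqj : q ^ j = 2 ^ (e * j) := by rw [hq, ← pow_mul]
    rw [hqj]
    exact add_pow_char_pow x y 2 (e * j)
  have h6 : ∀ y : F, y ^ q ^ 6 = y := fun y => by rw [← hF]; exact FiniteField.pow_card y
  have hcomp : ∀ (y : F) (i j : ℕ), (y ^ q ^ i) ^ q ^ j = y ^ q ^ (i + j) :=
    fun y i j => by rw [← pow_mul, ← pow_add]
  have hr6 : ∀ (y : F) (k : ℕ), y ^ q ^ (k + 6) = y ^ q ^ k :=
    fun y k => by rw [pow_add, pow_mul, h6]
  have hc11 : ∀ y : F, (y ^ q ^ 1) ^ q ^ 1 = y ^ q ^ 2 := fun y => hcomp y 1 1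
  have hc13 : ∀ y : F, (y ^ q ^ 1) ^ q ^ 3 = y ^ q ^ 4 := fun y => hcomp y 1 3
  have hc15 : ∀ y : F, (y ^ q ^ 1) ^ q ^ 5 = y := fun y => (hcomp y 1 5).trans (h6 y)
  have hc51 : ∀ y : F, (y ^ q ^ 5) ^ q ^ 1 = y := fun y => (hcomp y 5 1).trans (h6 y)
  have hc53 : ∀ y : F, (y ^ q ^ 5) ^ q ^ 3 = y ^ q ^ 2 := fun y => (hcomp y 5 3).trans (hr6 y 2)
  have hc55 : ∀ y : F, (y ^ q ^ 5) ^ q ^ 5 = y ^ q ^ 4 := fun y => (hcomp y 5 5).trans (hr6 y 4)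
  -- nonzero δ
  have hδne : δ ≠ 0 := by
    rintro rfl
    exact hδ0 (zero_pow (Nat.succ_ne_zero _))
  have hε : ρ δ ≠ 0 := fun h0 => hδne (ρ.injective (by simp [h0]))
  -- char-2 helper
  have htwo : ∀ u v : F, u = v → u + v = 0 := fun u v huv => by
    rw [huv]; exact CharTwo.add_self_eq_zero v
  have haddz : ∀ u v : F, u + v = 0 → u = v := fun u v huv => by
    have := eq_neg_of_add_eq_zero_left huv
    rwa [CharTwo.neg_eq] at this
  -- nonzero nat exponents
  have hq1ne : q ^ 1 ≠ 0 := by positivity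
  have hq3ne : q ^ 3 ≠ 0 := by positivity
  have hq5ne : q ^ 5 ≠ 0 := by positivity
  -- graph identity
  have hgr : ∀ x : F, C * ρ x + D * ρ (δ * x ^ q ^ s + x ^ q ^ (6 - s))
      = (A * ρ x + B * ρ (δ * x ^ q ^ s + x ^ q ^ (6 - s))) ^ q
        + b * (A * ρ x + B * ρ (δ * x ^ q ^ s + x ^ q ^ (6 - s))) ^ q ^ 3
        + c * (A * ρ x + B * ρ (δ * x ^ q ^ s + x ^ q ^ (6 - s))) ^ q ^ 5 := by
    intro x
    have hx : (A * ρ x + B * ρ (δ * x ^ q ^ s + x ^ q ^ (6 - s)),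
        C * ρ x + D * ρ (δ * x ^ q ^ s + x ^ q ^ (6 - s))) ∈
        {p : F × F | ∃ x : F, p = (x, x ^ q + b * x ^ (q ^ 3) + c * x ^ (q ^ 5))} := by
      rw [← hset]
      exact ⟨x, rfl⟩
    obtain ⟨x', hx'⟩ := hx
    rw [Prod.ext_iff] at hx'
    obtain ⟨h1, h2⟩ := hx'
    simp only at h1 h2
    rw [h2, ← h1]
  rcases hs with rfl | hs
  · -- case s = 1
    have hmain : ∀ y : F, C * y + D * (ρ δ * y ^ q ^ 1 + y ^ q ^ 5)
        = (A * y + B * (ρ δ * y ^ q ^ 1 + y ^ q ^ 5)) ^ q ^ 1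
          + b * (A * y + B * (ρ δ * y ^ q ^ 1 + y ^ q ^ 5)) ^ q ^ 3
          + c * (A * y + B * (ρ δ * y ^ q ^ 1 + y ^ q ^ 5)) ^ q ^ 5 := by
      intro y
      have h := hgr (ρ.symm y)
      simp only [map_add, map_mul, map_pow, RingEquiv.apply_symm_apply, pow_one] at h ⊢
      exact h
    obtain ⟨h0e, h1e, h2e, h3e, h4e, h5e⟩ := six_coeffs q hq2 hF
      (B ^ q ^ 1 + c * B ^ q ^ 5 * (ρ δ) ^ q ^ 5 + C)
      (A ^ q ^ 1 + D * ρ δ)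
      (B ^ q ^ 1 * (ρ δ) ^ q ^ 1 + b * B ^ q ^ 3)
      (b * A ^ q ^ 3)
      (b * B ^ q ^ 3 * (ρ δ) ^ q ^ 3 + c * B ^ q ^ 5)
      (c * A ^ q ^ 5 + D)
      (by
        intro y
        have h := hmain y
        simp only [mul_add, hadd, mul_pow, hc11, hc13, hc15, hc51, hc53, hc55] at h
        have h' := htwo _ _ h
        linear_combination h')
    have hA : A = 0 := by
      rcases mul_eq_zero.mp h3e with h | h
      · exact absurd h hb
      · exact (pow_eq_zero_iff hq3ne).mp h
    have hD : D = 0 := by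
      rw [hA, zero_pow hq5ne, mul_zero, zero_add] at h5e
      exact h5e
    have hB : B ≠ 0 := by
      intro h0
      apply hABCD
      rw [hA, hD, h0]
      ring
    have hE2 := haddz _ _ h2e
    have hE4 := haddz _ _ h4e
    have hE2' : B ^ q ^ 3 * (ρ δ) ^ q ^ 3 = b ^ q ^ 2 * B ^ q ^ 5 := by
      have := congrArg (· ^ q ^ 2) hE2
      simpa only [mul_pow, hcomp, Nat.reduceAdd] using this
    have hfin : c * B ^ q ^ 5 = b ^ (q ^ 2 + 1) * B ^ q ^ 5 := by
      rw [← hE4, pow_add, pow_one]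
      calc b * B ^ q ^ 3 * (ρ δ) ^ q ^ 3 = b * (B ^ q ^ 3 * (ρ δ) ^ q ^ 3) := by ring
      _ = b * (b ^ q ^ 2 * B ^ q ^ 5) := by rw [hE2']
      _ = b ^ q ^ 2 * b * B ^ q ^ 5 := by ring
    exact hbc (mul_right_cancel₀ (pow_ne_zero _ hB) hfin)
  · -- case s = 5
    rw [Set.mem_singleton_iff] at hs
    subst hs
    have hmain : ∀ y : F, C * y + D * (ρ δ * y ^ q ^ 5 + y ^ q ^ 1)
        = (A * y + B * (ρ δ * y ^ q ^ 5 + y ^ q ^ 1)) ^ q ^ 1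
          + b * (A * y + B * (ρ δ * y ^ q ^ 5 + y ^ q ^ 1)) ^ q ^ 3
          + c * (A * y + B * (ρ δ * y ^ q ^ 5 + y ^ q ^ 1)) ^ q ^ 5 := by
      intro y
      have h := hgr (ρ.symm y)
      simp only [show (6 - 5 : ℕ) = 1 from rfl, map_add, map_mul, map_pow,
        RingEquiv.apply_symm_apply, pow_one] at h ⊢
      exact h
    obtain ⟨h0e, h1e, h2e, h3e, h4e, h5e⟩ := six_coeffs q hq2 hF
      (B ^ q ^ 1 * (ρ δ) ^ q ^ 1 + c * B ^ q ^ 5 + C)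
      (A ^ q ^ 1 + D)
      (B ^ q ^ 1 + b * B ^ q ^ 3 * (ρ δ) ^ q ^ 3)
      (b * A ^ q ^ 3)
      (b * B ^ q ^ 3 + c * B ^ q ^ 5 * (ρ δ) ^ q ^ 5)
      (c * A ^ q ^ 5 + D * ρ δ)
      (by
        intro y
        have h := hmain y
        simp only [mul_add, hadd, mul_pow, hc11, hc13, hc15, hc51, hc53, hc55] at h
        have h' := htwo _ _ h
        linear_combination h')
    have hA : A = 0 := by
      rcases mul_eq_zero.mp h3e with h | h
      · exact absurd h hb
      · exact (pow_eq_zero_iff hq3ne).mp h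
    have hD : D = 0 := by
      rw [hA, zero_pow hq1ne, zero_add] at h1e
      exact h1e
    have hB : B ≠ 0 := by
      intro h0
      apply hABCD
      rw [hA, hD, h0]
      ring
    have hE2 := haddz _ _ h2e
    have hE4 := haddz _ _ h4e
    have hE2' : B ^ q ^ 3 = b ^ q ^ 2 * B ^ q ^ 5 * (ρ δ) ^ q ^ 5 := by
      have := congrArg (· ^ q ^ 2) hE2
      simpa only [mul_pow, hcomp, Nat.reduceAdd] using this
    have hfin : b ^ (q ^ 2 + 1) * (B ^ q ^ 5 * (ρ δ) ^ q ^ 5)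
        = c * (B ^ q ^ 5 * (ρ δ) ^ q ^ 5) := by
      rw [pow_add, pow_one]
      calc b ^ q ^ 2 * b * (B ^ q ^ 5 * (ρ δ) ^ q ^ 5)
          = b * (b ^ q ^ 2 * B ^ q ^ 5 * (ρ δ) ^ q ^ 5) := by ring
      _ = b * B ^ q ^ 3 := by rw [← hE2']
      _ = c * B ^ q ^ 5 * (ρ δ) ^ q ^ 5 := hE4
      _ = c * (B ^ q ^ 5 * (ρ δ) ^ q ^ 5) := by ring
    exact hbc (mul_right_cancel₀ (mul_ne_zero (pow_ne_zero _ hB) (pow_ne_zero _ hε)) hfin.symm)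
end
end

section
/- Let q be a power of 2, let F be a finite field with q^6 elements, let s ∈ {1,5} and let c ∈ F. If the map f_{c,s} : F → F defined by f_{c,s}(x) = x^{q^s} + x^{q^{3s}} + c·x^{q^{5s}} is scattered, then c^{q^4+q^2+1} + c^{q^4} + c^{q^2} + c ≠ 0 (that is, the norm of c over 𝔽_{q^2} plus the trace of c over 𝔽_{q^2} is nonzero). -/
noncomputable section

/-!
Suppose `N(c) + Tr(c) = 0`. In characteristic two this says that the `𝔽_{q²}`-linear map
`L(y) = c y + y^{q²} + y^{q⁴}` on `F` has a nonzero kernel: for `c ≠ 1` the element `(c + 1)⁻¹` lies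
in it, and for `c = 1` the map is the trace, which kills `v + v^{q²}`. Since `f_{c,s}(y^{q^s}) = L(y)`,
the kernel of `f_{c,s}` is nonzero and stable under multiplication by `𝔽_{q²}`; so `x` and `μ x` with
`μ ∈ 𝔽_{q²} \ 𝔽_q` violate scatteredness.
-/

section KernelOfTwistedTrace

variable {F : Type*} [Field F] [CharP F 2] (σ : F →+* F)

theorem exists_ne_zero_add_map_add_map_map_eq_zero (hσ : ∀ x, σ (σ (σ x)) = x) {v : F}
    (hv : σ v ≠ v) : ∃ y ≠ 0, y + σ y + σ (σ y) = 0 := by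
  have h2 : (2 : F) = 0 := CharTwo.two_eq_zero
  refine ⟨v + σ v, fun h => hv ?_, ?_⟩
  · linear_combination h - v * h2
  · simp only [map_add, hσ]
    linear_combination (v + σ v + σ (σ v)) * h2

theorem mul_inv_add_one_add_map_add_map_map_eq_zero {a : F} (ha1 : a ≠ 1)
    (ha : a * σ a * σ (σ a) + a + σ a + σ (σ a) = 0) :
    a * (a + 1)⁻¹ + σ (a + 1)⁻¹ + σ (σ (a + 1)⁻¹) = 0 := by
  have h2 : (2 : F) = 0 := CharTwo.two_eq_zero
  have h0 : a + 1 ≠ 0 := fun h => ha1 (by linear_combination h - h2)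
  have h1 : σ a + 1 ≠ 0 := by simpa using (map_ne_zero σ).mpr h0
  have h1' : σ (σ a) + 1 ≠ 0 := by simpa using (map_ne_zero σ).mpr h1
  simp only [map_inv₀, map_add, map_one]
  field_simp
  linear_combination ha + (a * σ a + a * σ (σ a) + a + 1) * h2

theorem exists_ne_zero_mul_add_map_add_map_map_eq_zero (hσ : ∀ x, σ (σ (σ x)) = x)
    (hmove : ∃ v, σ v ≠ v) {a : F} (ha : a * σ a * σ (σ a) + a + σ a + σ (σ a) = 0) :
    ∃ y ≠ 0, a * y + σ y + σ (σ y) = 0 := by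
  by_cases ha1 : a = 1
  · obtain ⟨v, hv⟩ := hmove
    simpa [ha1] using exists_ne_zero_add_map_add_map_map_eq_zero σ hσ hv
  · refine ⟨(a + 1)⁻¹, inv_ne_zero fun h => ha1 ?_,
      mul_inv_add_one_add_map_add_map_map_eq_zero σ ha1 ha⟩
    linear_combination h - CharTwo.two_eq_zero (R := F)

end KernelOfTwistedTrace

theorem Units.val_pow_eq_self_iff {M : Type*} [Monoid M] (u : Mˣ) {n : ℕ} (hn : n ≠ 0) :
    (u : M) ^ n = u ↔ u ^ (n - 1) = 1 := by
  rw [← Units.val_pow_eq_pow_val, Units.val_inj, ← pow_sub_one_mul hn, mul_eq_right]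

section FiniteField

variable {K : Type*} [Field K] [Fintype K] {q m : ℕ}

theorem one_lt_of_card_eq_pow (hK : Fintype.card K = q ^ m) (hm : m ≠ 0) : 1 < q :=
  (Nat.one_lt_pow_iff hm).mp (hK ▸ Fintype.one_lt_card)

theorem pow_pow_eq_pow_pow_mod (hK : Fintype.card K = q ^ m) (x : K) (n : ℕ) :
    x ^ q ^ n = x ^ q ^ (n % m) := by
  conv_lhs => rw [← Nat.mod_add_div n m, pow_add, pow_mul, pow_mul, ← hK,
    FiniteField.pow_card_pow]

theorem exists_pow_ne_self (hm1 : 1 < m) (hm : m < Fintype.card K) : ∃ v : K, v ^ m ≠ v := by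
  by_contra! h
  have hunits : ∀ u : Kˣ, u ^ (m - 1) = 1 := fun u =>
    (Units.val_pow_eq_self_iff u (by omega)).mp (h u)
  have := Nat.le_of_dvd (by omega) ((FiniteField.forall_pow_eq_one_iff K _).mp hunits)
  omega

theorem exists_pow_sq_eq_self_and_pow_ne_self (hq : 1 < q) (hK : Fintype.card K = q ^ m)
    (hm : 2 ∣ m) : ∃ μ : K, μ ^ q ^ 2 = μ ∧ μ ^ q ≠ μ := by
  classical
  have hdvd : q ^ 2 - 1 ∣ Fintype.card Kˣ := by
    rw [Fintype.card_units, hK]; exact Nat.pow_sub_one_dvd_pow_sub_one q hm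
  have hlt : q - 1 < q ^ 2 - 1 := by
    have : q < q ^ 2 := by nlinarith
    omega
  obtain ⟨u, hu⟩ := Finset.card_pos.mp
    ((IsCyclic.card_orderOf_eq_totient hdvd).symm ▸ Nat.totient_pos.mpr (by omega))
  have hu : orderOf u = q ^ 2 - 1 := (Finset.mem_filter.mp hu).2
  refine ⟨u, (Units.val_pow_eq_self_iff u (by positivity)).mpr (hu ▸ pow_orderOf_eq_one u),
    fun h => pow_ne_one_of_lt_orderOf (by omega) (hu ▸ hlt) ?_⟩
  exact (Units.val_pow_eq_self_iff u (by omega)).mp h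

theorem exists_ne_zero_mul_add_pow_add_pow_eq_zero [CharP K 2] {e : ℕ} (hq : q = 2 ^ e)
    (hK : Fintype.card K = q ^ 6) {c : K}
    (hc : c ^ (q ^ 4 + q ^ 2 + 1) + c ^ (q ^ 4) + c ^ (q ^ 2) + c = 0) :
    ∃ y ≠ 0, c * y + y ^ q ^ 2 + y ^ q ^ 4 = 0 := by
  obtain ⟨σ, hσ⟩ : ∃ σ : K →+* K, ∀ x, σ x = x ^ q ^ 2 :=
    ⟨iterateFrobenius K 2 (e * 2), fun x => by rw [iterateFrobenius_def, hq, ← pow_mul]⟩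
  have hσσ : ∀ x, σ (σ x) = x ^ q ^ 4 := fun x => by rw [hσ, hσ, ← pow_mul, ← pow_add]
  have hσ3 : ∀ x, σ (σ (σ x)) = x := fun x => by
    rw [hσσ, hσ, ← pow_mul, ← pow_add, ← hK, FiniteField.pow_card]
  have hq1 := one_lt_of_card_eq_pow hK (by norm_num)
  obtain ⟨v, hv⟩ := exists_pow_ne_self (K := K) (m := q ^ 2) (Nat.one_lt_pow (by norm_num) hq1)
    (hK ▸ Nat.pow_lt_pow_right hq1 (by norm_num))
  have hc' : c * σ c * σ (σ c) + c + σ c + σ (σ c) = 0 := by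
    rw [hσσ, hσ]
    rw [pow_add, pow_add, pow_one] at hc
    linear_combination hc
  obtain ⟨y, hy0, hy⟩ := exists_ne_zero_mul_add_map_add_map_map_eq_zero σ hσ3 ⟨v, by rwa [hσ]⟩ hc'
  exact ⟨y, hy0, by rwa [hσσ, hσ] at hy⟩

end FiniteField

def frobTrinomial (q s : ℕ) {F : Type*} [Field F] (c x : F) : F :=
  x ^ q ^ s + x ^ q ^ (3 * s) + c * x ^ q ^ (5 * s)

section FrobTrinomial

variable {K : Type*} [Field K] [Fintype K] {q s : ℕ}

theorem frobTrinomial_pow_pow (hK : Fintype.card K = q ^ 6) (hs : s = 1 ∨ s = 5) (c z : K) :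
    frobTrinomial q s c (z ^ q ^ s) = c * z + z ^ q ^ 2 + z ^ q ^ 4 := by
  have hz : ∀ n, z ^ q ^ n = z ^ q ^ (n % 6) := pow_pow_eq_pow_pow_mod hK z
  rcases hs with rfl | rfl <;>
  · simp only [frobTrinomial, ← pow_mul, ← pow_add]
    norm_num [hz 6, hz 10, hz 20, hz 30]
    ring

theorem frobTrinomial_mul_pow_pow (hK : Fintype.card K = q ^ 6) (hs : s = 1 ∨ s = 5) (c : K)
    {ν : K} (hν : ν ^ q ^ 2 = ν) (z : K) :
    frobTrinomial q s c ((ν * z) ^ q ^ s) = ν * frobTrinomial q s c (z ^ q ^ s) := by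
  have hν4 : ν ^ q ^ 4 = ν := by rw [show 4 = 2 + 2 by rfl, pow_add, pow_mul, hν, hν]
  rw [frobTrinomial_pow_pow hK hs, frobTrinomial_pow_pow hK hs, mul_pow, mul_pow, hν, hν4]
  ring

end FrobTrinomial

theorem IsScattered.pow_eq_self_of_map_eq_zero {q : ℕ} {F : Type*} [Field F] {f : F → F}
    (hf : IsScattered q f) {x μ : F} (hx : x ≠ 0) (hμ : μ ≠ 0) (hfx : f x = 0)
    (hfμx : f (μ * x) = 0) : μ ^ q = μ := by
  obtain ⟨l, hl, h⟩ := hf (μ * x) x (mul_ne_zero hμ hx) hx (by rw [hfx, hfμx, zero_mul, zero_mul])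
  rwa [mul_right_cancel₀ hx h]

theorem statement9_general (e q : ℕ) (hq : q = 2 ^ e)
    (F : Type) [Field F] [Fintype F] (hF : Fintype.card F = q ^ 6)
    (s : ℕ) (hs : s = 1 ∨ s = 5) (c : F)
    (hscat : IsScattered q
      (fun x : F => x ^ (q ^ s) + x ^ (q ^ (3 * s)) + c * x ^ (q ^ (5 * s)))) :
    c ^ (q ^ 4 + q ^ 2 + 1) + c ^ (q ^ 4) + c ^ (q ^ 2) + c ≠ 0 := by
  intro hc
  have hscat : IsScattered q (frobTrinomial q s c) := hscat
  have : CharP F 2 := charP_of_card_eq_prime_pow (f := e * 6) (by rw [hF, hq, ← pow_mul])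
  obtain ⟨y, hy0, hy⟩ := exists_ne_zero_mul_add_pow_add_pow_eq_zero hq hF hc
  have hq1 := one_lt_of_card_eq_pow hF (by norm_num)
  obtain ⟨μ, hμ2, hμq⟩ := exists_pow_sq_eq_self_and_pow_ne_self hq1 hF (by norm_num : 2 ∣ 6)
  have hμ0 : μ ≠ 0 := by rintro rfl; exact hμq (zero_pow (by omega))
  have hν : (μ ^ q ^ (5 * s)) ^ q ^ 2 = μ ^ q ^ (5 * s) := by
    rw [← pow_mul, mul_comm, pow_mul, hμ2]
  have hμy : μ * y ^ q ^ s = (μ ^ q ^ (5 * s) * y) ^ q ^ s := by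
    rw [mul_pow, ← pow_mul, ← pow_add, pow_pow_eq_pow_pow_mod hF μ,
      show (5 * s + s) % 6 = 0 by omega, pow_zero, pow_one]
  have hf0 : frobTrinomial q s c (y ^ q ^ s) = 0 := (frobTrinomial_pow_pow hF hs c y).trans hy
  exact hμq (hscat.pow_eq_self_of_map_eq_zero (pow_ne_zero _ hy0) hμ0 hf0
    (by rw [hμy, frobTrinomial_mul_pow_pow hF hs c hν, hf0, mul_zero]))

theorem statement9 (e q : ℕ) (he : 1 ≤ e) (hq : q = 2 ^ e)
    (F : Type) [Field F] [Fintype F] (hF : Fintype.card F = q ^ 6)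
    (s : ℕ) (hs : s = 1 ∨ s = 5) (c : F)
    (hscat : IsScattered q
      (fun x : F => x ^ (q ^ s) + x ^ (q ^ (3 * s)) + c * x ^ (q ^ (5 * s)))) :
    c ^ (q ^ 4 + q ^ 2 + 1) + c ^ (q ^ 4) + c ^ (q ^ 2) + c ≠ 0 :=
  statement9_general e q hq F hF s hs c hscat
end
end

section
/- Let q be a power of 2, let F be a finite field with q^6 elements, let s ∈ {1,5}, and let c ∈ 𝔠 be such that the map f_{c,s}(x) = x^{q^s} + x^{q^{3s}} + c·x^{q^{5s}} is scattered. Let φ : F → F be an 𝔽_q-linear map (additive, with φ(λ·x) = λ·φ(x) whenever λ^q = λ). Then the following are equivalent: (1) for all a, b ∈ F there exist a', b' ∈ F such that a·φ(x) + b·f_{c,s}(φ(x)) = a'·x + b'·f_{c,s}(x) for all x ∈ F; (2) there exists α ∈ F with α^{q^2} = α and φ(x) = α·x for all x ∈ F. (That is, the right idealizer of the MRD code D_{c,s} = {x ↦ a·x + b·f_{c,s}(x) : a, b ∈ F} is {x ↦ α·x : α ∈ 𝔽_{q^2}}.) -/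
noncomputable section

open Polynomial in
private theorem six_indep (q : ℕ) (hq2 : 2 ≤ q) {F : Type} [Field F] [Fintype F]
    (hF : Fintype.card F = q ^ 6) (a0 a1 a2 a3 a4 a5 : F)
    (h : ∀ x : F, a0 * x ^ q ^ 0 + a1 * x ^ q ^ 1 + a2 * x ^ q ^ 2 + a3 * x ^ q ^ 3
      + a4 * x ^ q ^ 4 + a5 * x ^ q ^ 5 = 0) :
    a0 = 0 ∧ a1 = 0 ∧ a2 = 0 ∧ a3 = 0 ∧ a4 = 0 ∧ a5 = 0 := by
  classical
  set p : Polynomial F := C a0 * X ^ q ^ 0 + C a1 * X ^ q ^ 1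
    + C a2 * X ^ q ^ 2 + C a3 * X ^ q ^ 3
    + C a4 * X ^ q ^ 4 + C a5 * X ^ q ^ 5 with hp
  have hb : ∀ (a : F) (i : ℕ), i ≤ 5 → (C a * X ^ q ^ i).natDegree ≤ q ^ 5 := by
    intro a i hi
    refine le_trans (natDegree_C_mul_le _ _) ?_
    simpa [natDegree_X_pow] using Nat.pow_le_pow_right (by omega) hi
  have hdeg : p.natDegree < Fintype.card F := by
    rw [hF]
    have h5 : q ^ 5 < q ^ 6 := Nat.pow_lt_pow_right (by omega) (by omega)
    have : p.natDegree ≤ q ^ 5 := by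
      refine le_trans (natDegree_add_le _ _) (max_le (le_trans (natDegree_add_le _ _)
        (max_le (le_trans (natDegree_add_le _ _) (max_le (le_trans (natDegree_add_le _ _)
          (max_le (le_trans (natDegree_add_le _ _) (max_le ?_ ?_)) ?_)) ?_)) ?_)) ?_)
      · exact hb a0 0 (by omega)
      · exact hb a1 1 (by omega)
      · exact hb a2 2 (by omega)
      · exact hb a3 3 (by omega)
      · exact hb a4 4 (by omega)
      · exact hb a5 5 (by omega)
    omega
  have hev : ∀ x : F, p.eval x = 0 := by
    intro x
    simp only [hp, eval_add, eval_mul, eval_C, eval_pow, eval_X]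
    exact h x
  have hp0 : p = 0 :=
    eq_zero_of_natDegree_lt_card_of_eval_eq_zero p Function.injective_id
      (fun i => hev i) (by simpa using hdeg)
  have hco : ∀ k : ℕ, p.coeff k = 0 := fun k => by rw [hp0]; simp
  refine ⟨?_, ?_, ?_, ?_, ?_, ?_⟩
  · have := hco (q ^ 0)
    simp only [hp, coeff_add, coeff_C_mul, coeff_X_pow,
      (Nat.pow_right_injective hq2).eq_iff] at this
    simpa using this
  · have := hco (q ^ 1)
    simp only [hp, coeff_add, coeff_C_mul, coeff_X_pow,
      (Nat.pow_right_injective hq2).eq_iff] at this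
    simpa using this
  · have := hco (q ^ 2)
    simp only [hp, coeff_add, coeff_C_mul, coeff_X_pow,
      (Nat.pow_right_injective hq2).eq_iff] at this
    simpa using this
  · have := hco (q ^ 3)
    simp only [hp, coeff_add, coeff_C_mul, coeff_X_pow,
      (Nat.pow_right_injective hq2).eq_iff] at this
    simpa using this
  · have := hco (q ^ 4)
    simp only [hp, coeff_add, coeff_C_mul, coeff_X_pow,
      (Nat.pow_right_injective hq2).eq_iff] at this
    simpa using this
  · have := hco (q ^ 5)
    simp only [hp, coeff_add, coeff_C_mul, coeff_X_pow,
      (Nat.pow_right_injective hq2).eq_iff] at this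
    simpa using this

private theorem cert_t1 {Fq : Type} [Field Fq] (c u1 u2 u4 : Fq) (htwo : (2:Fq) = 0)
    (hSG : u1*((1+u2)*(1+c)) + c*((1+u2)*(1+u4)) + (1+u4)*(1+c) = 0)
    (hN : c*u2*u4 = 1) :
    (c*u1*u2 + 1) * (u2^2*u1*c^4 + u2^3*u1^2*c^3 + u2*u1^2*c^3 + u2^3*u1*c^3 + u2*u1*c^3 + u2^2*c^3 + u2*c^3 + u2^4*u1*c^2 + u1*c^2 + u2^3*c^2 + c^2 + u2^3*u1^2*c + u2*u1^2*c + u2^3*u1*c + u2*u1*c + u2^3*c + c + u2^2*u1 + u2^2 + u2) * (u2^2*u1*c^2 + u2*u1*c^2 + u2^2*c^2 + u2^2*u1*c + u2*u1*c + 1) = 0 := by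
  linear_combination (c*u2^2 + c*u2^3 + c*u1*u2^3 + c^2*u2 + c^2*u2^4 + c^2*u1*u2^2 + c^2*u1*u2^3 + c^2*u1^2*u2^2 + c^3*u2 + c^3*u2^4 + c^3*u1*u2 + c^3*u1*u2^2 + c^3*u1^2*u2^3 + c^3*u1^2*u2^5 + c^3*u1^3*u2^3 + c^3*u1^3*u2^5 + c^4*u2^2 + c^4*u2^3 + c^4*u1*u2^4 + c^4*u1*u2^5 + c^4*u1^2*u2^4 + c^4*u1^2*u2^6 + c^5*u1*u2^4 + c^5*u1^2*u2^3 + c^5*u1^2*u2^5 + c^5*u1^3*u2^3 + c^5*u1^3*u2^5 + c^6*u1^2*u2^4)*hSG + (u2 + u2^2 + u1*u2^2 + c + c*u2^2 + c*u1*u2 + c*u1*u2^2 + c*u1*u2^3 + c*u1^2*u2 + c^2 + c^2*u2 + c^2*u2^3 + c^2*u2^4 + c^2*u1 + c^2*u1*u2 + c^2*u1*u2^2 + c^2*u1*u2^3 + c^2*u1^2*u2^4 + c^2*u1^3*u2^2 + c^2*u1^3*u2^4 + c^3*u2^2 + c^3*u2^4 + c^3*u1*u2 + c^3*u1*u2^2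 + c^3*u1*u2^3 + c^3*u1*u2^4 + c^3*u1^3*u2^3 + c^3*u1^3*u2^5 + c^4*u2^2 + c^4*u2^3 + c^4*u1*u2^3 + c^4*u1*u2^4 + c^4*u1*u2^5 + c^4*u1^2*u2^2 + c^4*u1^2*u2^6 + c^4*u1^3*u2^2 + c^4*u1^3*u2^4 + c^5*u1*u2^4 + c^5*u1^2*u2^5 + c^5*u1^3*u2^3 + c^5*u1^3*u2^5 + c^6*u1^2*u2^4)*hN + (u2 + u2^2 + u1*u2^2 + c - c*u2^2*u4 - c*u2^3*u4 + c*u1*u2 + c*u1*u2^2 + c*u1*u2^3 - c*u1*u2^3*u4 + c*u1^2*u2 + c*u1^2*u2^3 + c^2 - c^2*u2*u4 - c^2*u2^2 - c^2*u2^2*u4 - 2*c^2*u2^3*u4 - c^2*u2^4*u4 + c^2*u1 + c^2*u1*u2 - c^2*u1*u2^2*u4 - c^2*u1*u2^3 - 2*c^2*u1*u2^3*u4 + c^2*u1*u2^4 - c^2*u1*u2^4*u4 - c^2*u1^2*u2^2*u4 + 2*c^2*u1^2*u2^4 + c^2*u1^2*u2^5 + c^2*u1^3*u2^2 + 2*c^2*u1^3*u2^4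 + c^2*u1^3*u2^5 - c^3*u2 - 2*c^3*u2*u4 + c^3*u2^2 - c^3*u2^2*u4 - c^3*u2^4 - 2*c^3*u2^4*u4 - c^3*u2^5*u4 + c^3*u1*u2 - c^3*u1*u2*u4 - c^3*u1*u2^2 - 2*c^3*u1*u2^2*u4 - 2*c^3*u1*u2^3*u4 + c^3*u1*u2^4 - c^3*u1*u2^4*u4 + c^3*u1*u2^5 + c^3*u1^2*u2 - c^3*u1^2*u2^2 - c^3*u1^2*u2^2*u4 - c^3*u1^2*u2^3*u4 + c^3*u1^2*u2^4 + 3*c^3*u1^2*u2^5 - c^3*u1^2*u2^5*u4 + c^3*u1^2*u2^6 - c^3*u1^3*u2^3*u4 + c^3*u1^3*u2^4 + c^3*u1^3*u2^5 - c^3*u1^3*u2^5*u4 - c^4*u2 - c^4*u2*u4 - c^4*u2^2*u4 - c^4*u2^3*u4 - c^4*u2^4 - c^4*u2^4*u4 - c^4*u2^5*u4 - c^4*u1*u2 - c^4*u1*u2*u4 - 2*c^4*u1*u2^2*u4 + c^4*u1*u2^3 - c^4*u1*u2^3*u4 - c^4*u1*u2^4*u4 - c^4*u1*u2^5*u4 +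 c^4*u1*u2^6 + 2*c^4*u1^2*u2^2 - c^4*u1^2*u2^3*u4 - c^4*u1^2*u2^4*u4 - c^4*u1^2*u2^5*u4 + c^4*u1^2*u2^6 - c^4*u1^2*u2^6*u4 + 2*c^4*u1^3*u2^2 - c^4*u1^3*u2^3*u4 + c^4*u1^3*u2^4 - c^4*u1^3*u2^4*u4 - c^4*u1^3*u2^5 - c^4*u1^3*u2^5*u4 - c^4*u1^3*u2^6*u4 - c^5*u2^2 - c^5*u2^2*u4 - c^5*u2^3 - 2*c^5*u2^3*u4 - c^5*u2^4*u4 + c^5*u1*u2^3 - c^5*u1*u2^4 - 2*c^5*u1*u2^4*u4 - c^5*u1*u2^5 - 2*c^5*u1*u2^5*u4 - c^5*u1*u2^6*u4 + c^5*u1^2*u2^2 + 3*c^5*u1^2*u2^3 - c^5*u1^2*u2^3*u4 - c^5*u1^2*u2^4*u4 - c^5*u1^2*u2^5*u4 - c^5*u1^2*u2^6 - c^5*u1^2*u2^6*u4 - c^5*u1^2*u2^7*u4 + c^5*u1^3*u2^2 + c^5*u1^3*u2^3 - c^5*u1^3*u2^3*u4 - c^5*u1^3*u2^5*u4 - c^6*u1*u2^4*u4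 - c^6*u1*u2^5*u4 - c^6*u1^2*u2^3*u4 + c^6*u1^2*u2^4 - c^6*u1^2*u2^4*u4 - c^6*u1^2*u2^5 - c^6*u1^2*u2^5*u4 - c^6*u1^2*u2^6*u4 - c^6*u1^3*u2^3 - c^6*u1^3*u2^3*u4 - c^6*u1^3*u2^4*u4 - c^6*u1^3*u2^5 - c^6*u1^3*u2^5*u4 - c^6*u1^3*u2^6*u4 - c^7*u1^2*u2^4 - c^7*u1^2*u2^4*u4 - c^7*u1^2*u2^5*u4)*htwo

private theorem cert_t5 {Fq : Type} [Field Fq] (c u1 u2 u4 : Fq) (htwo : (2:Fq) = 0)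
    (hSG : u1*((1+c)*(1+u2)) + u2*((1+c)*(1+u4)) + (1+u2)*(1+u4) = 0)
    (hN : c*u2*u4 = 1) :
    (c*u1*u2 + 1) * (u2^2*u1*c^4 + u2^3*u1^2*c^3 + u2*u1^2*c^3 + u2^3*u1*c^3 + u2*u1*c^3 + u2^2*c^3 + u2*c^3 + u2^4*u1*c^2 + u1*c^2 + u2^3*c^2 + c^2 + u2^3*u1^2*c + u2*u1^2*c + u2^3*u1*c + u2*u1*c + u2^3*c + c + u2^2*u1 + u2^2 + u2) * (u2^2*u1*c^2 + u2*u1*c^2 + u2^2*c^2 + u2^2*u1*c + u2*u1*c + 1) = 0 := by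
  linear_combination (c*u2^2 + c*u2^3 + c*u1*u2^3 + c^2*u2 + c^2*u2^4 + c^2*u1*u2^2 + c^2*u1*u2^3 + c^2*u1^2*u2^2 + c^3*u2 + c^3*u2^4 + c^3*u1*u2 + c^3*u1*u2^2 + c^3*u1^2*u2^3 + c^3*u1^2*u2^5 + c^3*u1^3*u2^3 + c^3*u1^3*u2^5 + c^4*u2^2 + c^4*u2^3 + c^4*u1*u2^4 + c^4*u1*u2^5 + c^4*u1^2*u2^4 + c^4*u1^2*u2^6 + c^5*u1*u2^4 + c^5*u1^2*u2^3 + c^5*u1^2*u2^5 + c^5*u1^3*u2^3 + c^5*u1^3*u2^5 + c^6*u1^2*u2^4)*hSG + (u2 + u2^2 + u1*u2^2 + c + c*u2^2 + c*u1*u2 + c*u1*u2^2 + c*u1*u2^3 + c*u1^2*u2 + c^2 + c^2*u2 + c^2*u2^3 + c^2*u2^4 + c^2*u1 + c^2*u1*u2 + c^2*u1*u2^2 + c^2*u1*u2^3 + c^2*u1^2*u2^4 + c^2*u1^3*u2^2 + c^2*u1^3*u2^4 + c^3*u2^2 + c^3*u2^4 + c^3*u1*u2 + c^3*u1*u2^2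 + c^3*u1*u2^3 + c^3*u1*u2^4 + c^3*u1^3*u2^3 + c^3*u1^3*u2^5 + c^4*u2^2 + c^4*u2^3 + c^4*u1*u2^3 + c^4*u1*u2^4 + c^4*u1*u2^5 + c^4*u1^2*u2^2 + c^4*u1^2*u2^6 + c^4*u1^3*u2^2 + c^4*u1^3*u2^4 + c^5*u1*u2^4 + c^5*u1^2*u2^5 + c^5*u1^3*u2^3 + c^5*u1^3*u2^5 + c^6*u1^2*u2^4)*hN + (u2 + u2^2 + u1*u2^2 + c - c*u2^2*u4 - c*u2^3 - 2*c*u2^3*u4 - c*u2^4 - c*u2^4*u4 + c*u1*u2 + c*u1*u2^2 + c*u1*u2^3 - c*u1*u2^3*u4 - c*u1*u2^4 - c*u1*u2^4*u4 + c*u1^2*u2 + c*u1^2*u2^3 + c^2 - c^2*u2*u4 - c^2*u2^2 - c^2*u2^2*u4 + c^2*u2^3 - c^2*u2^3*u4 - c^2*u2^4*u4 - c^2*u2^5 - c^2*u2^5*u4 + c^2*u1 + c^2*u1*u2 - c^2*u1*u2^2*u4 - c^2*u1*u2^3 - 2*c^2*u1*u2^3*u4 - 2*c^2*u1*u2^4*u4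 - c^2*u1^2*u2^2*u4 - c^2*u1^2*u2^3 - c^2*u1^2*u2^3*u4 + 2*c^2*u1^2*u2^4 + c^2*u1^2*u2^5 + c^2*u1^3*u2^2 + 2*c^2*u1^3*u2^4 + c^2*u1^3*u2^5 - c^3*u2*u4 - 2*c^3*u2^2*u4 - c^3*u2^4*u4 - c^3*u2^5 - 2*c^3*u2^5*u4 + c^3*u1*u2 - c^3*u1*u2*u4 - c^3*u1*u2^2 - 2*c^3*u1*u2^2*u4 - 2*c^3*u1*u2^3*u4 + c^3*u1*u2^4 - c^3*u1*u2^4*u4 + c^3*u1*u2^5 + c^3*u1^2*u2 - c^3*u1^2*u2^3*u4 - c^3*u1^2*u2^4*u4 + 3*c^3*u1^2*u2^5 - c^3*u1^2*u2^5*u4 - c^3*u1^2*u2^6*u4 - c^3*u1^3*u2^3*u4 - c^3*u1^3*u2^4*u4 + c^3*u1^3*u2^5 - c^3*u1^3*u2^5*u4 - c^3*u1^3*u2^6 - c^3*u1^3*u2^6*u4 - c^4*u2^2*u4 - c^4*u2^3 - 2*c^4*u2^3*u4 - c^4*u2^4 - c^4*u2^4*u4 - c^4*u2^5*u4 + c^4*u1*u2^2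 - c^4*u1*u2^2*u4 + c^4*u1*u2^3 - c^4*u1*u2^3*u4 - c^4*u1*u2^4*u4 - c^4*u1*u2^5 - 2*c^4*u1*u2^5*u4 - c^4*u1*u2^6*u4 + 2*c^4*u1^2*u2^2 + c^4*u1^2*u2^3 - c^4*u1^2*u2^4*u4 - c^4*u1^2*u2^5*u4 + c^4*u1^2*u2^6 - c^4*u1^2*u2^6*u4 - c^4*u1^2*u2^7 - c^4*u1^2*u2^7*u4 + 2*c^4*u1^3*u2^2 + c^4*u1^3*u2^3 + c^4*u1^3*u2^4 - c^4*u1^3*u2^4*u4 - c^4*u1^3*u2^6*u4 - c^5*u2^3*u4 - c^5*u2^4*u4 + c^5*u1*u2^3 - c^5*u1*u2^4*u4 - c^5*u1*u2^5 - 2*c^5*u1*u2^5*u4 - c^5*u1*u2^6*u4 + c^5*u1^2*u2^2 + 3*c^5*u1^2*u2^3 - c^5*u1^2*u2^3*u4 - c^5*u1^2*u2^4*u4 - c^5*u1^2*u2^5*u4 - c^5*u1^2*u2^6 - c^5*u1^2*u2^6*u4 - c^5*u1^2*u2^7*u4 + c^5*u1^3*u2^2 + c^5*u1^3*u2^3 -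 c^5*u1^3*u2^3*u4 - c^5*u1^3*u2^4 - c^5*u1^3*u2^4*u4 - c^5*u1^3*u2^5*u4 - c^5*u1^3*u2^6 - c^5*u1^3*u2^6*u4 + c^6*u1*u2^4 - c^6*u1*u2^5*u4 + c^6*u1^2*u2^3 + c^6*u1^2*u2^4 - c^6*u1^2*u2^4*u4 - c^6*u1^2*u2^5 - c^6*u1^2*u2^5*u4 - c^6*u1^2*u2^6*u4 - c^6*u1^3*u2^4*u4 - c^6*u1^3*u2^6*u4 - c^7*u1^2*u2^5*u4)*htwo

theorem statement11 (e q : ℕ) (he : 1 ≤ e) (hq : q = 2 ^ e)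
    (F : Type) [Field F] [Fintype F] (hF : Fintype.card F = q ^ 6)
    (s : ℕ) (hs : s = 1 ∨ s = 5) (c : F) (hc : c ∈ frakC q F)
    (hscat : IsScattered q
      (fun x : F => x ^ (q ^ s) + x ^ (q ^ (3 * s)) + c * x ^ (q ^ (5 * s))))
    (φ : F → F) (hadd : ∀ x y : F, φ (x + y) = φ x + φ y)
    (hlin : ∀ l x : F, l ^ q = l → φ (l * x) = l * φ x) :
    (∀ a b : F, ∃ a' b' : F, ∀ x : F,
        a * φ x + b * ((φ x) ^ (q ^ s) + (φ x) ^ (q ^ (3 * s)) + c * (φ x) ^ (q ^ (5 * s))) =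
          a' * x + b' * (x ^ (q ^ s) + x ^ (q ^ (3 * s)) + c * x ^ (q ^ (5 * s)))) ↔
      (∃ α : F, α ^ (q ^ 2) = α ∧ ∀ x : F, φ x = α * x) := by
  have hq2 : 2 ≤ q := by
    rw [hq]
    calc 2 = 2 ^ 1 := (pow_one 2).symm
    _ ≤ 2 ^ e := Nat.pow_le_pow_right (by omega) he
  haveI hp2 : CharP F 2 := by
    haveI := ringChar.charP F
    obtain ⟨n, hprime, hcard⟩ := FiniteField.card F (ringChar F)
    have hpow : ringChar F ^ (n : ℕ) = 2 ^ (e * 6) := by rw [← hcard, hF, hq, ← pow_mul]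
    have hdvd : ringChar F ∣ 2 ^ (e * 6) := by rw [← hpow]; exact dvd_pow_self _ n.pos.ne'
    have h2 : ringChar F = 2 :=
      (Nat.prime_dvd_prime_iff_eq hprime Nat.prime_two).mp (hprime.dvd_of_dvd_pow hdvd)
    exact h2 ▸ ringChar.charP F
  have htwo : (2 : F) = 0 := by exact_mod_cast CharP.cast_eq_zero F 2
  have hq6 : ∀ x : F, x ^ q ^ 6 = x := fun x => by rw [← hF]; exact FiniteField.pow_card x
  have hpp : ∀ (x : F) (i j : ℕ), (x ^ q ^ i) ^ q ^ j = x ^ q ^ (i + j) := fun x i j => by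
    rw [← pow_mul, ← pow_add]
  have hΦ : ∀ (k : ℕ) (x : F), iterateFrobenius F 2 (e * k) x = x ^ q ^ k := fun k x => by
    rw [iterateFrobenius_def, hq, ← pow_mul]
  have hred : ∀ (x : F) (k : ℕ), x ^ q ^ (k + 6) = x ^ q ^ k := fun x k => by
    have h := hpp x k 6; rw [hq6] at h; exact h.symm
  have r7 : ∀ x : F, x ^ q ^ 7 = x ^ q ^ 1 := fun x => by
    rw [show (7:ℕ) = 1 + 6 from rfl, hred]
  have r8 : ∀ x : F, x ^ q ^ 8 = x ^ q ^ 2 := fun x => by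
    rw [show (8:ℕ) = 2 + 6 from rfl, hred]
  have r9 : ∀ x : F, x ^ q ^ 9 = x ^ q ^ 3 := fun x => by
    rw [show (9:ℕ) = 3 + 6 from rfl, hred]
  have r10 : ∀ x : F, x ^ q ^ 10 = x ^ q ^ 4 := fun x => by
    rw [show (10:ℕ) = 4 + 6 from rfl, hred]
  have r15 : ∀ x : F, x ^ q ^ 15 = x ^ q ^ 3 := fun x => by
    rw [show (15:ℕ) = 9 + 6 from rfl, hred, show (9:ℕ) = 3 + 6 from rfl, hred]
  have r25 : ∀ x : F, x ^ q ^ 25 = x ^ q ^ 1 := fun x => by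
    rw [show (25:ℕ) = 19 + 6 from rfl, hred, show (19:ℕ) = 13 + 6 from rfl, hred,
      show (13:ℕ) = 7 + 6 from rfl, hred, show (7:ℕ) = 1 + 6 from rfl, hred]
  constructor
  · -- forward direction
    intro hyp
    obtain ⟨A, B, h1⟩ := hyp 1 0
    simp only [one_mul, zero_mul, add_zero] at h1
    obtain ⟨Cc, D, h2⟩ := hyp 0 1
    simp only [zero_mul, one_mul, zero_add] at h2
    rcases hs with hs | hs
    · -- case s = 1
      subst hs
      simp only [show (3 * 1 : ℕ) = 3 from rfl, show (5 * 1 : ℕ) = 5 from rfl] at h1 h2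
      have X1 : ∀ x : F, (A*x + B*(x^q^1 + x^q^3 + c*x^q^5))^q^1
          = A^q^1 * x^q^1 + B^q^1 * (x^q^2 + x^q^4 + c^q^1 * x) := by
        intro x
        conv_lhs => rw [← hΦ 1 (A*x + B*(x^q^1 + x^q^3 + c*x^q^5))]
        simp only [map_add, map_mul, map_pow]
        simp only [hΦ, hpp, Nat.reduceAdd, hq6, r7, r8, r9, r10]
        try ring
      have X3 : ∀ x : F, (A*x + B*(x^q^1 + x^q^3 + c*x^q^5))^q^3
          = A^q^3 * x^q^3 + B^q^3 * (x^q^4 + x + c^q^3 * x^q^2) := by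
        intro x
        conv_lhs => rw [← hΦ 3 (A*x + B*(x^q^1 + x^q^3 + c*x^q^5))]
        simp only [map_add, map_mul, map_pow]
        simp only [hΦ, hpp, Nat.reduceAdd, hq6, r7, r8, r9, r10]
        try ring
      have X5 : ∀ x : F, (A*x + B*(x^q^1 + x^q^3 + c*x^q^5))^q^5
          = A^q^5 * x^q^5 + B^q^5 * (x + x^q^2 + c^q^5 * x^q^4) := by
        intro x
        conv_lhs => rw [← hΦ 5 (A*x + B*(x^q^1 + x^q^3 + c*x^q^5))]
        simp only [map_add, map_mul, map_pow]
        simp only [hΦ, hpp, Nat.reduceAdd, hq6, r7, r8, r9, r10]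
        try ring
      have key : ∀ x : F,
          (c^q^1*B^q^1 + B^q^3 + c*B^q^5 - Cc) * x ^ q ^ 0
          + (A^q^1 - D) * x ^ q ^ 1
          + (B^q^1 + c^q^3*B^q^3 + c*B^q^5) * x ^ q ^ 2
          + (A^q^3 - D) * x ^ q ^ 3
          + (B^q^1 + B^q^3 + c*c^q^5*B^q^5) * x ^ q ^ 4
          + (c*A^q^5 - D*c) * x ^ q ^ 5 = 0 := by
        intro x
        have e2 := h2 x
        rw [h1 x, X1 x, X3 x, X5 x] at e2
        linear_combination e2
      obtain ⟨-, hA1, hE1, hA3, hE2, -⟩ := six_indep q hq2 hF _ _ _ _ _ _ key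
      have hA13 : A^q^1 = A^q^3 := by linear_combination hA1 - hA3
      have hAA : A ^ q ^ 2 = A := by
        have h := congrArg (fun t : F => iterateFrobenius F 2 (e*5) t) hA13
        simp only [map_pow] at h
        simp only [hΦ, hpp, Nat.reduceAdd, hq6, r7, r8, r9, r10] at h
        exact h.symm
      have hB0 : B = 0 := by
        by_contra hB
        have hcne : c ≠ 0 := by
          rintro rfl
          rw [zero_pow (pow_ne_zero 3 (by omega : q ≠ 0))] at hE1
          simp only [zero_mul, mul_zero, add_zero, zero_add] at hE1
          exact hB ((pow_eq_zero_iff (pow_ne_zero 1 (by omega : q ≠ 0))).mp hE1)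
        have hc1 : c ≠ 1 := fun h => hc.1 (by rw [h, one_pow])
        have hne3 : c ^ q ^ 3 ≠ 1 := by
          intro h
          apply hc1
          have h33 := hpp c 3 3
          rw [h, one_pow] at h33
          norm_num at h33
          rw [← hq6 c, ← h33]
        have hd3 : (1 : F) + c ^ q ^ 3 ≠ 0 := fun h => hne3 (by linear_combination h - htwo)
        have hB3 : B ^ q ^ 3 ≠ 0 := pow_ne_zero _ hB
        have hB5 : B ^ q ^ 5 ≠ 0 := pow_ne_zero _ hB
        have U0 : (1 + c^q^3) * B^q^3 = c * ((1 + c^q^5) * B^q^5) := by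
          linear_combination hE1 + hE2 - (B^q^1 + c*B^q^5 + c*c^q^5*B^q^5) * htwo
        have U2 : (1 + c^q^5) * B^q^5 = c^q^2 * ((1 + c^q^1) * B^q^1) := by
          have h := congrArg (fun t : F => iterateFrobenius F 2 (e*2) t) U0
          simp only [map_add, map_mul, map_pow, map_one] at h
          simp only [hΦ, hpp, Nat.reduceAdd, hq6, r7, r8, r9, r10] at h
          linear_combination h
        have U4 : (1 + c^q^1) * B^q^1 = c^q^4 * ((1 + c^q^3) * B^q^3) := by
          have h := congrArg (fun t : F => iterateFrobenius F 2 (e*2) t) U2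
          simp only [map_add, map_mul, map_pow, map_one] at h
          simp only [hΦ, hpp, Nat.reduceAdd, hq6, r7, r8, r9, r10] at h
          linear_combination h
        have hN : c * c^q^2 * c^q^4 = 1 := by
          have hkey : (c * c^q^2 * c^q^4) * ((1 + c^q^3) * B^q^3)
              = 1 * ((1 + c^q^3) * B^q^3) := by
            linear_combination -U0 - c*U2 - (c*c^q^2)*U4
          exact mul_right_cancel₀ (mul_ne_zero hd3 hB3) hkey
        have HG0 : c^q^4*((1 + c^q^5)*(1 + c^q^3)) + c^q^3*((1 + c^q^5)*(1 + c^q^1))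
            + (1 + c^q^1)*(1 + c^q^3) = 0 := by
          have hkey : (c * B^q^5) * (c^q^4*((1 + c^q^5)*(1 + c^q^3))
              + c^q^3*((1 + c^q^5)*(1 + c^q^1)) + (1 + c^q^1)*(1 + c^q^3)) = 0 := by
            linear_combination ((1 + c^q^1)*(1 + c^q^3))*hE1
              - (c^q^4*(1 + c^q^3) + c^q^3*(1 + c^q^1))*U0 - (1 + c^q^3)*U4
          exact (mul_eq_zero.mp hkey).resolve_left (mul_ne_zero hcne hB5)
        have hSG : c^q^1*((1 + c^q^2)*(1 + c)) + c*((1 + c^q^2)*(1 + c^q^4))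
            + (1 + c^q^4)*(1 + c) = 0 := by
          have h := congrArg (fun t : F => iterateFrobenius F 2 (e*3) t) HG0
          simp only [map_add, map_mul, map_pow, map_one, map_zero] at h
          simp only [hΦ, hpp, Nat.reduceAdd, hq6, r7, r8, r9, r10] at h
          linear_combination h
        have hcert := cert_t1 c (c^q^1) (c^q^2) (c^q^4) htwo hSG hN
        exact hc.2.2.2 (by
          simp only [F3, F4, F5, pow_add, pow_mul', pow_one]
          linear_combination hcert)
      exact ⟨A, hAA, fun x => by rw [h1 x, hB0]; ring⟩
    · -- case s = 5
      subst hs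
      simp only [show (3 * 5 : ℕ) = 15 from rfl, show (5 * 5 : ℕ) = 25 from rfl] at h1 h2
      simp only [r15, r25] at h1 h2
      have X1 : ∀ x : F, (A*x + B*(x^q^5 + x^q^3 + c*x^q^1))^q^1
          = A^q^1 * x^q^1 + B^q^1 * (x + x^q^4 + c^q^1 * x^q^2) := by
        intro x
        conv_lhs => rw [← hΦ 1 (A*x + B*(x^q^5 + x^q^3 + c*x^q^1))]
        simp only [map_add, map_mul, map_pow]
        simp only [hΦ, hpp, Nat.reduceAdd, hq6, r7, r8, r9, r10]
        try ring
      have X3 : ∀ x : F, (A*x + B*(x^q^5 + x^q^3 + c*x^q^1))^q^3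
          = A^q^3 * x^q^3 + B^q^3 * (x^q^2 + x + c^q^3 * x^q^4) := by
        intro x
        conv_lhs => rw [← hΦ 3 (A*x + B*(x^q^5 + x^q^3 + c*x^q^1))]
        simp only [map_add, map_mul, map_pow]
        simp only [hΦ, hpp, Nat.reduceAdd, hq6, r7, r8, r9, r10]
        try ring
      have X5 : ∀ x : F, (A*x + B*(x^q^5 + x^q^3 + c*x^q^1))^q^5
          = A^q^5 * x^q^5 + B^q^5 * (x^q^4 + x^q^2 + c^q^5 * x) := by
        intro x
        conv_lhs => rw [← hΦ 5 (A*x + B*(x^q^5 + x^q^3 + c*x^q^1))]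
        simp only [map_add, map_mul, map_pow]
        simp only [hΦ, hpp, Nat.reduceAdd, hq6, r7, r8, r9, r10]
        try ring
      have key : ∀ x : F,
          (c^q^5*B^q^5 + B^q^3 + c*B^q^1 - Cc) * x ^ q ^ 0
          + (c*A^q^1 - D*c) * x ^ q ^ 1
          + (B^q^5 + B^q^3 + c*c^q^1*B^q^1) * x ^ q ^ 2
          + (A^q^3 - D) * x ^ q ^ 3
          + (B^q^5 + c^q^3*B^q^3 + c*B^q^1) * x ^ q ^ 4
          + (A^q^5 - D) * x ^ q ^ 5 = 0 := by
        intro x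
        have e2 := h2 x
        rw [h1 x, X1 x, X3 x, X5 x] at e2
        linear_combination e2
      obtain ⟨-, -, hE2, hA3, hE1, hA5⟩ := six_indep q hq2 hF _ _ _ _ _ _ key
      have hA35 : A^q^3 = A^q^5 := by linear_combination hA3 - hA5
      have hAA : A ^ q ^ 2 = A := by
        have h := congrArg (fun t : F => iterateFrobenius F 2 (e*3) t) hA35
        simp only [map_pow] at h
        simp only [hΦ, hpp, Nat.reduceAdd, hq6, r7, r8, r9, r10] at h
        exact h.symm
      have hB0 : B = 0 := by
        by_contra hB
        have hcne : c ≠ 0 := by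
          rintro rfl
          rw [zero_pow (pow_ne_zero 3 (by omega : q ≠ 0))] at hE1
          simp only [zero_mul, mul_zero, add_zero, zero_add] at hE1
          exact hB ((pow_eq_zero_iff (pow_ne_zero 5 (by omega : q ≠ 0))).mp hE1)
        have hc1 : c ≠ 1 := fun h => hc.1 (by rw [h, one_pow])
        have hne3 : c ^ q ^ 3 ≠ 1 := by
          intro h
          apply hc1
          have h33 := hpp c 3 3
          rw [h, one_pow] at h33
          norm_num at h33
          rw [← hq6 c, ← h33]
        have hd3 : (1 : F) + c ^ q ^ 3 ≠ 0 := fun h => hne3 (by linear_combination h - htwo)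
        have hB3 : B ^ q ^ 3 ≠ 0 := pow_ne_zero _ hB
        have hB1 : B ^ q ^ 1 ≠ 0 := pow_ne_zero _ hB
        have U0 : (1 + c^q^3) * B^q^3 = c * ((1 + c^q^1) * B^q^1) := by
          linear_combination hE1 + hE2 - (B^q^5 + c*B^q^1 + c*c^q^1*B^q^1) * htwo
        have U2 : (1 + c^q^5) * B^q^5 = c^q^2 * ((1 + c^q^3) * B^q^3) := by
          have h := congrArg (fun t : F => iterateFrobenius F 2 (e*2) t) U0
          simp only [map_add, map_mul, map_pow, map_one] at h
          simp only [hΦ, hpp, Nat.reduceAdd, hq6, r7, r8, r9, r10] at h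
          linear_combination h
        have U4 : (1 + c^q^1) * B^q^1 = c^q^4 * ((1 + c^q^5) * B^q^5) := by
          have h := congrArg (fun t : F => iterateFrobenius F 2 (e*2) t) U2
          simp only [map_add, map_mul, map_pow, map_one] at h
          simp only [hΦ, hpp, Nat.reduceAdd, hq6, r7, r8, r9, r10] at h
          linear_combination h
        have hN : c * c^q^2 * c^q^4 = 1 := by
          have hkey : (c * c^q^2 * c^q^4) * ((1 + c^q^3) * B^q^3)
              = 1 * ((1 + c^q^3) * B^q^3) := by
            linear_combination -U0 - c*U4 - (c*c^q^4)*U2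
          exact mul_right_cancel₀ (mul_ne_zero hd3 hB3) hkey
        have HG0 : c^q^2*((1 + c^q^1)*(1 + c^q^3)) + c^q^3*((1 + c^q^1)*(1 + c^q^5))
            + (1 + c^q^3)*(1 + c^q^5) = 0 := by
          have hkey : (c * B^q^1) * (c^q^2*((1 + c^q^1)*(1 + c^q^3))
              + c^q^3*((1 + c^q^1)*(1 + c^q^5)) + (1 + c^q^3)*(1 + c^q^5)) = 0 := by
            linear_combination ((1 + c^q^3)*(1 + c^q^5))*hE1
              - (1 + c^q^3)*U2 - (c^q^2*(1 + c^q^3) + c^q^3*(1 + c^q^5))*U0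
          exact (mul_eq_zero.mp hkey).resolve_left (mul_ne_zero hcne hB1)
        have hSG : c^q^1*((1 + c)*(1 + c^q^2)) + c^q^2*((1 + c)*(1 + c^q^4))
            + (1 + c^q^2)*(1 + c^q^4) = 0 := by
          have h := congrArg (fun t : F => iterateFrobenius F 2 (e*5) t) HG0
          simp only [map_add, map_mul, map_pow, map_one, map_zero] at h
          simp only [hΦ, hpp, Nat.reduceAdd, hq6, r7, r8, r9, r10] at h
          linear_combination h
        have hcert := cert_t5 c (c^q^1) (c^q^2) (c^q^4) htwo hSG hN
        exact hc.2.2.2 (by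
          simp only [F3, F4, F5, pow_add, pow_mul', pow_one]
          linear_combination hcert)
      exact ⟨A, hAA, fun x => by rw [h1 x, hB0]; ring⟩
  · -- reverse direction
    rintro ⟨α, hα, hφ⟩ a b
    have hodd : ∀ k : ℕ, α ^ q ^ (2*k+1) = α ^ q ^ 1 := by
      intro k
      induction k with
      | zero => norm_num
      | succ m ih =>
        have h1 : (α ^ q ^ 2) ^ q ^ (2*m+1) = α ^ q ^ (2*(m+1)+1) := by rw [hpp]; ring_nf
        rw [← h1, hα, ih]
    refine ⟨a * α, b * α ^ q ^ 1, fun x => ?_⟩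
    rw [hφ x]
    rcases hs with hs | hs <;> subst hs
    · have g3 : α ^ q ^ (3*1) = α ^ q ^ 1 := by
        have h := hodd 1; norm_num at h ⊢; exact h
      have g5 : α ^ q ^ (5*1) = α ^ q ^ 1 := by
        have h := hodd 2; norm_num at h ⊢; exact h
      have g1 : α ^ q ^ 1 = α ^ q ^ 1 := rfl
      simp only [mul_pow]
      rw [g3, g5]
      ring
    · have g5 : α ^ q ^ 5 = α ^ q ^ 1 := by
        have h := hodd 2; norm_num at h ⊢; exact h
      have g15 : α ^ q ^ (3*5) = α ^ q ^ 1 := by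
        have h := hodd 7; norm_num at h ⊢; exact h
      have g25 : α ^ q ^ (5*5) = α ^ q ^ 1 := by
        have h := hodd 12; norm_num at h ⊢; exact h
      simp only [mul_pow]
      rw [g5, g15, g25]
      ring
end
end

section
/- Let q be a power of 2, let F be a finite field with q^6 elements, and let c ∈ 𝔠. Then c^{q^4+q^2+1} ≠ 1 (that is, the norm of c over 𝔽_{q^2} is different from 1). -/
noncomputable section

theorem statement13 (e q : ℕ) (he : 1 ≤ e) (hq : q = 2 ^ e)
    (F : Type) [Field F] [Fintype F] (hF : Fintype.card F = q ^ 6)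
    (c : F) (hc : c ∈ frakC q F) :
    c ^ (q ^ 4 + q ^ 2 + 1) ≠ 1 := by
  obtain ⟨hfix, hF1, hF2, hprod⟩ := hc
  intro hN'
  have hq0 : q ≠ 0 := by rw [hq]; positivity
  -- characteristic 2
  obtain ⟨p, hp⟩ := CharP.exists F
  haveI := hp
  have hpp : p.Prime := CharP.char_is_prime F p
  obtain ⟨n, -, hcard⟩ := FiniteField.card F p
  have hp2 : p = 2 := by
    have hdvd : p ∣ 2 ^ (e * 6) := by
      have : p ^ (n : ℕ) = 2 ^ (e * 6) := by
        rw [← hcard, hF, hq, ← pow_mul]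
      exact this ▸ dvd_pow_self p n.2.ne'
    exact (Nat.prime_dvd_prime_iff_eq hpp Nat.prime_two).mp (hpp.dvd_of_dvd_pow hdvd)
  subst hp2
  haveI : Fact (Nat.Prime 2) := ⟨Nat.prime_two⟩
  have htwo : (2 : F) = 0 := by exact_mod_cast CharP.cast_eq_zero F 2
  -- Frobenius
  have frobq : ∀ x y : F, (x + y) ^ q = x ^ q + y ^ q := fun x y => by
    rw [hq]; exact add_pow_char_pow ..
  have frobq2 : ∀ x y : F, (x + y) ^ q ^ 2 = x ^ q ^ 2 + y ^ q ^ 2 := fun x y => by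
    rw [hq, ← pow_mul]; exact add_pow_char_pow ..
  -- basic nonvanishing
  have hc0 : c ≠ 0 := by
    rintro rfl
    exact hfix (zero_pow (by positivity))
  have hF3 : F3 q c ≠ 0 := fun h => hprod (by rw [h, zero_mul, zero_mul])
  have hF5 : F5 q c ≠ 0 := fun h => hprod (by rw [h, mul_zero])
  -- norm relations
  have hNq : c ^ (q + q ^ 3 + q ^ 5) = 1 := by
    rw [show q + q ^ 3 + q ^ 5 = (q ^ 4 + q ^ 2 + 1) * q by ring, pow_mul, hN', one_pow]
  -- F1 and its Frobenius shift
  simp only [F1] at hF1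
  have hF1' : 1 + c ^ (q ^ 3) + c ^ (q + q ^ 2 + q ^ 3) + c ^ (q + q ^ 2 + 2 * q ^ 3) + c ^ (1) + c ^ (1 + q ^ 2 + q ^ 3 + q ^ 4) + c ^ (1 + q + q ^ 3) + c ^ (1 + q + q ^ 2 + 2 * q ^ 3 + q ^ 4) = 0 := by linear_combination hF1
  have hF1q : 1 + c ^ (q ^ 4) + c ^ (q ^ 2 + q ^ 3 + q ^ 4) + c ^ (q ^ 2 + q ^ 3 + 2 * q ^ 4) + c ^ (q) + c ^ (q + q ^ 3 + q ^ 4 + q ^ 5) + c ^ (q + q ^ 2 + q ^ 4) + c ^ (q + q ^ 2 + q ^ 3 + 2 * q ^ 4 + q ^ 5) = 0 := by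
    calc 1 + c ^ (q ^ 4) + c ^ (q ^ 2 + q ^ 3 + q ^ 4) + c ^ (q ^ 2 + q ^ 3 + 2 * q ^ 4) + c ^ (q) + c ^ (q + q ^ 3 + q ^ 4 + q ^ 5) + c ^ (q + q ^ 2 + q ^ 4) + c ^ (q + q ^ 2 + q ^ 3 + 2 * q ^ 4 + q ^ 5)
        = (1 + c ^ (q ^ 3) + c ^ (q + q ^ 2 + q ^ 3) + c ^ (q + q ^ 2 + 2 * q ^ 3) + c ^ (1) + c ^ (1 + q ^ 2 + q ^ 3 + q ^ 4) + c ^ (1 + q + q ^ 3) + c ^ (1 + q + q ^ 2 + 2 * q ^ 3 + q ^ 4)) ^ q := by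
          simp only [frobq, one_pow, ← pow_mul]; ring
      _ = 0 := by rw [hF1']; exact zero_pow hq0
  -- Frobenius shifts of F3 and F5
  have hS3 : (F3 q c) ^ q ^ 2 = 1 + c ^ (q ^ 2 + q ^ 3 + q ^ 4) := by
    simp only [F3, frobq2, one_pow, ← pow_mul]; ring
  have hS5a : (F5 q c) ^ q = 1 + c ^ (q + q ^ 2 + q ^ 3) + c ^ (q + q ^ 2 + 2 * q ^ 3) + c ^ (2 * q + 2 * q ^ 3) + c ^ (2 * q + q ^ 2 + q ^ 3) + c ^ (2 * q + q ^ 2 + 2 * q ^ 3) := by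
    simp only [F5, frobq, one_pow, ← pow_mul]; ring
  have hS5b : (F5 q c) ^ q ^ 2 = 1 + c ^ (q ^ 2 + q ^ 3 + q ^ 4) + c ^ (q ^ 2 + q ^ 3 + 2 * q ^ 4) + c ^ (2 * q ^ 2 + 2 * q ^ 4) + c ^ (2 * q ^ 2 + q ^ 3 + q ^ 4) + c ^ (2 * q ^ 2 + q ^ 3 + 2 * q ^ 4) := by
    simp only [F5, frobq2, one_pow, ← pow_mul]; ring
  -- the key algebraic identity
  have key : c ^ (6 + 3 * q + 4 * q ^ 2 + 3 * q ^ 3)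
      * ((F3 q c) ^ q ^ 2 * ((F5 q c) ^ q * (F5 q c) ^ q ^ 2)) = 0 := by
    rw [hS3, hS5a, hS5b]
    linear_combination (c ^ (3 + 3 * q + 3 * q ^ 2 + 3 * q ^ 3) + c ^ (3 + 3 * q + 4 * q ^ 2 + 4 * q ^ 3) + c ^ (3 + 3 * q + 4 * q ^ 2 + 5 * q ^ 3) + c ^ (3 + 4 * q + 3 * q ^ 2 + 5 * q ^ 3) + c ^ (3 + 4 * q + 4 * q ^ 2 + 4 * q ^ 3) + c ^ (3 + 4 * q + 4 * q ^ 2 + 5 * q ^ 3) + c ^ (4 + 3 * q + 4 * q ^ 2 + 3 * q ^ 3) + c ^ (4 + 3 * q + 5 * q ^ 2 + 5 * q ^ 3) + c ^ (4 + 4 * q + 4 * q ^ 2 + 3 * q ^ 3) + c ^ (4 + 4 * q + 4 * q ^ 2 + 4 * q ^ 3) + c ^ (4 + 4 * q + 4 * q ^ 2 + 5 * q ^ 3) + c ^ (4 + 4 * q + 5 * q ^ 2 + 5 * q ^ 3) + c ^ (5 + 3 * q + 5 * q ^ 2 + 4 * q ^ 3) + c ^ (5 + 4 * q + 4 * q ^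 2 + 3 * q ^ 3) + c ^ (5 + 4 * q + 4 * q ^ 2 + 4 * q ^ 3) + c ^ (5 + 4 * q + 5 * q ^ 2 + 4 * q ^ 3)) * hF1' + (c ^ (5 + 3 * q + 4 * q ^ 2 + 3 * q ^ 3) + c ^ (5 + 3 * q + 4 * q ^ 2 + 4 * q ^ 3) + c ^ (6 + 3 * q + 4 * q ^ 2 + 3 * q ^ 3) + c ^ (6 + 3 * q + 5 * q ^ 2 + 4 * q ^ 3) + c ^ (6 + 4 * q + 4 * q ^ 2 + 4 * q ^ 3) + c ^ (6 + 4 * q + 5 * q ^ 2 + 4 * q ^ 3)) * hF1q + ((-2 : F) * c ^ (3 + 3 * q + 3 * q ^ 2 + 4 * q ^ 3) + c ^ (3 + 3 * q + 4 * q ^ 2 + 4 * q ^ 3) + (-1 : F) * c ^ (3 + 3 * q + 4 * q ^ 2 + 6 * q ^ 3) + (-1 : F) * c ^ (3 + 4 * q + 3 * q ^ 2 + 4 * q ^ 3 + q ^ 5) + (-1 : F) * c ^ (3 + 4 * q + 3 * q ^ 2 + 5 * q ^ 3) + (-1 : F) * c ^ (3 + 4 * q + 3 * q ^ 2 + 5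 * q ^ 3 + q ^ 5) + (-1 : F) * c ^ (3 + 4 * q + 3 * q ^ 2 + 6 * q ^ 3) + (-1 : F) * c ^ (3 + 4 * q + 4 * q ^ 2 + 5 * q ^ 3) + (-1 : F) * c ^ (3 + 4 * q + 4 * q ^ 2 + 6 * q ^ 3) + c ^ (3 + 4 * q + 5 * q ^ 2 + 5 * q ^ 3) + (2 : F) * c ^ (3 + 4 * q + 5 * q ^ 2 + 6 * q ^ 3) + c ^ (3 + 4 * q + 5 * q ^ 2 + 7 * q ^ 3) + c ^ (3 + 5 * q + 4 * q ^ 2 + 6 * q ^ 3) + c ^ (3 + 5 * q + 4 * q ^ 2 + 7 * q ^ 3) + c ^ (3 + 5 * q + 5 * q ^ 2 + 5 * q ^ 3) + (2 : F) * c ^ (3 + 5 * q + 5 * q ^ 2 + 6 * q ^ 3) + c ^ (3 + 5 * q + 5 * q ^ 2 + 7 * q ^ 3) + (-1 : F) * c ^ (4 + 3 * q + 3 * q ^ 2 + 3 * q ^ 3) + (-1 : F) * c ^ (4 + 3 * q + 3 * q ^ 2 + 4 * q ^ 3) + c ^ (4 + 3 * q + 4 * q ^ 2 + 3 * q ^ 3)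 + (-1 : F) * c ^ (4 + 3 * q + 4 * q ^ 2 + 4 * q ^ 3) + (-1 : F) * c ^ (4 + 3 * q + 4 * q ^ 2 + 4 * q ^ 3 + q ^ 4) + (-1 : F) * c ^ (4 + 3 * q + 4 * q ^ 2 + 5 * q ^ 3) + c ^ (4 + 3 * q + 5 * q ^ 2 + 4 * q ^ 3 + q ^ 4) + c ^ (4 + 3 * q + 5 * q ^ 2 + 5 * q ^ 3) + c ^ (4 + 3 * q + 5 * q ^ 2 + 5 * q ^ 3 + q ^ 4) + (-1 : F) * c ^ (4 + 3 * q + 5 * q ^ 2 + 6 * q ^ 3) + (-2 : F) * c ^ (4 + 4 * q + 3 * q ^ 2 + 4 * q ^ 3 + q ^ 5) + (-1 : F) * c ^ (4 + 4 * q + 3 * q ^ 2 + 5 * q ^ 3) + (-1 : F) * c ^ (4 + 4 * q + 3 * q ^ 2 + 5 * q ^ 3 + q ^ 5) + (-1 : F) * c ^ (4 + 4 * q + 4 * q ^ 2 + 3 * q ^ 3) + (-2 : F) * c ^ (4 + 4 * q + 4 * q ^ 2 + 4 * q ^ 3) + (-1 : F) * c ^ (4 + 4 * q + 4 * q ^ 2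 + 4 * q ^ 3 + q ^ 4 + q ^ 5) + (-2 : F) * c ^ (4 + 4 * q + 4 * q ^ 2 + 5 * q ^ 3) + (-1 : F) * c ^ (4 + 4 * q + 4 * q ^ 2 + 5 * q ^ 3 + q ^ 5) + (-1 : F) * c ^ (4 + 4 * q + 4 * q ^ 2 + 5 * q ^ 3 + q ^ 4 + q ^ 5) + c ^ (4 + 4 * q + 5 * q ^ 2 + 4 * q ^ 3) + (2 : F) * c ^ (4 + 4 * q + 5 * q ^ 2 + 5 * q ^ 3) + c ^ (4 + 4 * q + 5 * q ^ 2 + 6 * q ^ 3) + c ^ (4 + 4 * q + 5 * q ^ 2 + 6 * q ^ 3 + q ^ 4) + c ^ (4 + 4 * q + 5 * q ^ 2 + 7 * q ^ 3 + q ^ 4) + c ^ (4 + 4 * q + 6 * q ^ 2 + 5 * q ^ 3 + q ^ 4) + c ^ (4 + 4 * q + 6 * q ^ 2 + 6 * q ^ 3) + (2 : F) * c ^ (4 + 4 * q + 6 * q ^ 2 + 6 * q ^ 3 + q ^ 4) + c ^ (4 + 4 * q + 6 * q ^ 2 + 7 * q ^ 3) + c ^ (4 + 4 * q + 6 * q ^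 2 + 7 * q ^ 3 + q ^ 4) + (-1 : F) * c ^ (4 + 5 * q + 3 * q ^ 2 + 5 * q ^ 3 + q ^ 5) + c ^ (4 + 5 * q + 3 * q ^ 2 + 6 * q ^ 3) + c ^ (4 + 5 * q + 4 * q ^ 2 + 5 * q ^ 3) + (-1 : F) * c ^ (4 + 5 * q + 4 * q ^ 2 + 5 * q ^ 3 + q ^ 5) + c ^ (4 + 5 * q + 4 * q ^ 2 + 6 * q ^ 3) + c ^ (4 + 5 * q + 4 * q ^ 2 + 7 * q ^ 3 + q ^ 4) + c ^ (4 + 5 * q + 5 * q ^ 2 + 4 * q ^ 3) + (2 : F) * c ^ (4 + 5 * q + 5 * q ^ 2 + 5 * q ^ 3) + (2 : F) * c ^ (4 + 5 * q + 5 * q ^ 2 + 6 * q ^ 3) + (2 : F) * c ^ (4 + 5 * q + 5 * q ^ 2 + 6 * q ^ 3 + q ^ 4) + c ^ (4 + 5 * q + 5 * q ^ 2 + 7 * q ^ 3) + (2 : F) * c ^ (4 + 5 * q + 5 * q ^ 2 + 7 * q ^ 3 + q ^ 4) + c ^ (4 + 5 * q + 6 * q ^ 2 + 5 * q ^ 3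 + q ^ 4) + c ^ (4 + 5 * q + 6 * q ^ 2 + 6 * q ^ 3) + (2 : F) * c ^ (4 + 5 * q + 6 * q ^ 2 + 6 * q ^ 3 + q ^ 4) + c ^ (4 + 5 * q + 6 * q ^ 2 + 7 * q ^ 3) + c ^ (4 + 5 * q + 6 * q ^ 2 + 7 * q ^ 3 + q ^ 4) + (-1 : F) * c ^ (5 + 3 * q + 3 * q ^ 2 + 3 * q ^ 3) + c ^ (5 + 3 * q + 5 * q ^ 2 + 3 * q ^ 3 + q ^ 4) + c ^ (5 + 3 * q + 5 * q ^ 2 + 4 * q ^ 3) + c ^ (5 + 3 * q + 5 * q ^ 2 + 4 * q ^ 3 + q ^ 4) + (-2 : F) * c ^ (5 + 3 * q + 5 * q ^ 2 + 5 * q ^ 3) + c ^ (5 + 3 * q + 5 * q ^ 2 + 5 * q ^ 3 + 2 * q ^ 4) + c ^ (5 + 3 * q + 6 * q ^ 2 + 4 * q ^ 3 + 2 * q ^ 4) + c ^ (5 + 3 * q + 6 * q ^ 2 + 5 * q ^ 3 + q ^ 4) + c ^ (5 + 3 * q + 6 * q ^ 2 + 5 * q ^ 3 + 2 * q ^ 4)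 + (-1 : F) * c ^ (5 + 4 * q + 3 * q ^ 2 + 4 * q ^ 3) + (-1 : F) * c ^ (5 + 4 * q + 3 * q ^ 2 + 4 * q ^ 3 + q ^ 5) + (-1 : F) * c ^ (5 + 4 * q + 4 * q ^ 2 + 3 * q ^ 3) + (-2 : F) * c ^ (5 + 4 * q + 4 * q ^ 2 + 4 * q ^ 3) + (-1 : F) * c ^ (5 + 4 * q + 4 * q ^ 2 + 4 * q ^ 3 + q ^ 4 + q ^ 5) + (-2 : F) * c ^ (5 + 4 * q + 4 * q ^ 2 + 5 * q ^ 3) + (-1 : F) * c ^ (5 + 4 * q + 4 * q ^ 2 + 5 * q ^ 3 + q ^ 5) + (-1 : F) * c ^ (5 + 4 * q + 4 * q ^ 2 + 5 * q ^ 3 + q ^ 4) + (-1 : F) * c ^ (5 + 4 * q + 5 * q ^ 2 + 4 * q ^ 3) + (-1 : F) * c ^ (5 + 4 * q + 5 * q ^ 2 + 5 * q ^ 3 + q ^ 4 + q ^ 5) + c ^ (5 + 4 * q + 5 * q ^ 2 + 6 * q ^ 3) + c ^ (5 + 4 * q + 5 * q ^ 2 + 6 * q ^ 3 + q ^ 4)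 + c ^ (5 + 4 * q + 6 * q ^ 2 + 4 * q ^ 3 + q ^ 4) + c ^ (5 + 4 * q + 6 * q ^ 2 + 5 * q ^ 3) + (2 : F) * c ^ (5 + 4 * q + 6 * q ^ 2 + 5 * q ^ 3 + q ^ 4) + c ^ (5 + 4 * q + 6 * q ^ 2 + 6 * q ^ 3) + (2 : F) * c ^ (5 + 4 * q + 6 * q ^ 2 + 6 * q ^ 3 + q ^ 4) + c ^ (5 + 4 * q + 6 * q ^ 2 + 6 * q ^ 3 + 2 * q ^ 4) + c ^ (5 + 4 * q + 6 * q ^ 2 + 7 * q ^ 3 + q ^ 4) + c ^ (5 + 4 * q + 6 * q ^ 2 + 7 * q ^ 3 + 2 * q ^ 4) + c ^ (5 + 4 * q + 7 * q ^ 2 + 5 * q ^ 3 + 2 * q ^ 4) + c ^ (5 + 4 * q + 7 * q ^ 2 + 6 * q ^ 3 + q ^ 4) + (2 : F) * c ^ (5 + 4 * q + 7 * q ^ 2 + 6 * q ^ 3 + 2 * q ^ 4) + c ^ (5 + 4 * q + 7 * q ^ 2 + 7 * q ^ 3 + q ^ 4) + c ^ (5 + 4 * q + 7 * q ^ 2 +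 7 * q ^ 3 + 2 * q ^ 4) + (-1 : F) * c ^ (5 + 5 * q + 3 * q ^ 2 + 5 * q ^ 3 + q ^ 5) + (-1 : F) * c ^ (5 + 5 * q + 4 * q ^ 2 + 4 * q ^ 3) + (-1 : F) * c ^ (5 + 5 * q + 4 * q ^ 2 + 5 * q ^ 3) + (-1 : F) * c ^ (5 + 5 * q + 4 * q ^ 2 + 5 * q ^ 3 + q ^ 5) + (-1 : F) * c ^ (5 + 5 * q + 4 * q ^ 2 + 5 * q ^ 3 + q ^ 4 + q ^ 5) + c ^ (5 + 5 * q + 4 * q ^ 2 + 6 * q ^ 3) + c ^ (5 + 5 * q + 4 * q ^ 2 + 6 * q ^ 3 + q ^ 4) + (-1 : F) * c ^ (5 + 5 * q + 5 * q ^ 2 + 4 * q ^ 3) + (2 : F) * c ^ (5 + 5 * q + 5 * q ^ 2 + 5 * q ^ 3) + (2 : F) * c ^ (5 + 5 * q + 5 * q ^ 2 + 5 * q ^ 3 + q ^ 4) + (-1 : F) * c ^ (5 + 5 * q + 5 * q ^ 2 + 5 * q ^ 3 + q ^ 4 + q ^ 5) + (2 : F) * c ^ (5 + 5 * q + 5 *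 q ^ 2 + 6 * q ^ 3) + (2 : F) * c ^ (5 + 5 * q + 5 * q ^ 2 + 6 * q ^ 3 + q ^ 4) + c ^ (5 + 5 * q + 5 * q ^ 2 + 7 * q ^ 3 + q ^ 4) + c ^ (5 + 5 * q + 5 * q ^ 2 + 7 * q ^ 3 + 2 * q ^ 4) + c ^ (5 + 5 * q + 6 * q ^ 2 + 4 * q ^ 3 + q ^ 4) + c ^ (5 + 5 * q + 6 * q ^ 2 + 5 * q ^ 3) + (2 : F) * c ^ (5 + 5 * q + 6 * q ^ 2 + 5 * q ^ 3 + q ^ 4) + c ^ (5 + 5 * q + 6 * q ^ 2 + 6 * q ^ 3) + (2 : F) * c ^ (5 + 5 * q + 6 * q ^ 2 + 6 * q ^ 3 + q ^ 4) + (2 : F) * c ^ (5 + 5 * q + 6 * q ^ 2 + 6 * q ^ 3 + 2 * q ^ 4) + (2 : F) * c ^ (5 + 5 * q + 6 * q ^ 2 + 7 * q ^ 3 + q ^ 4) + (2 : F) * c ^ (5 + 5 * q + 6 * q ^ 2 + 7 * q ^ 3 + 2 * q ^ 4) + c ^ (5 + 5 * q + 7 * q ^ 2 + 5 * q ^ 3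 + 2 * q ^ 4) + c ^ (5 + 5 * q + 7 * q ^ 2 + 6 * q ^ 3 + q ^ 4) + (2 : F) * c ^ (5 + 5 * q + 7 * q ^ 2 + 6 * q ^ 3 + 2 * q ^ 4) + c ^ (5 + 5 * q + 7 * q ^ 2 + 7 * q ^ 3 + q ^ 4) + c ^ (5 + 5 * q + 7 * q ^ 2 + 7 * q ^ 3 + 2 * q ^ 4)) * hN'
      + ((-1 : F) * c ^ (3 + 3 * q + 3 * q ^ 2 + 3 * q ^ 3) + (-1 : F) * c ^ (3 + 3 * q + 3 * q ^ 2 + 4 * q ^ 3) + (-2 : F) * c ^ (4 + 3 * q + 3 * q ^ 2 + 3 * q ^ 3) + (-1 : F) * c ^ (4 + 3 * q + 3 * q ^ 2 + 4 * q ^ 3) + (-1 : F) * c ^ (4 + 3 * q + 4 * q ^ 2 + 4 * q ^ 3) + (-1 : F) * c ^ (4 + 4 * q + 3 * q ^ 2 + 4 * q ^ 3) + (-1 : F) * c ^ (4 + 4 * q + 4 * q ^ 2 + 4 * q ^ 3) + (-1 : F) * c ^ (5 + 3 * q + 3 * q ^ 2 + 3 * q ^ 3) + (-1 : F) * c ^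 (5 + 3 * q + 4 * q ^ 2 + 4 * q ^ 3) + (-1 : F) * c ^ (5 + 4 * q + 3 * q ^ 2 + 4 * q ^ 3) + (-1 : F) * c ^ (5 + 4 * q + 4 * q ^ 2 + 4 * q ^ 3)) * hNq + ((-1 : F) * c ^ (3 + 3 * q + 3 * q ^ 2 + 3 * q ^ 3) + (-2 : F) * c ^ (3 + 3 * q + 3 * q ^ 2 + 4 * q ^ 3) + (-1 : F) * c ^ (3 + 3 * q + 4 * q ^ 2 + 5 * q ^ 3) + (-1 : F) * c ^ (3 + 3 * q + 4 * q ^ 2 + 6 * q ^ 3) + (-1 : F) * c ^ (3 + 4 * q + 3 * q ^ 2 + 5 * q ^ 3) + (-1 : F) * c ^ (3 + 4 * q + 3 * q ^ 2 + 6 * q ^ 3) + (-1 : F) * c ^ (3 + 4 * q + 4 * q ^ 2 + 4 * q ^ 3) + (-2 : F) * c ^ (3 + 4 * q + 4 * q ^ 2 + 5 * q ^ 3) + (-1 : F) * c ^ (3 + 4 * q + 4 * q ^ 2 + 6 * q ^ 3) + (-2 : F) * c ^ (4 + 3 * q + 3 * q ^ 2 + 3 * q ^ 3) + (-1 : F)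 * c ^ (4 + 3 * q + 3 * q ^ 2 + 4 * q ^ 3) + (-2 : F) * c ^ (4 + 3 * q + 4 * q ^ 2 + 4 * q ^ 3) + (-1 : F) * c ^ (4 + 3 * q + 4 * q ^ 2 + 5 * q ^ 3) + (-1 : F) * c ^ (4 + 3 * q + 5 * q ^ 2 + 6 * q ^ 3) + (-1 : F) * c ^ (4 + 4 * q + 3 * q ^ 2 + 4 * q ^ 3) + (-1 : F) * c ^ (4 + 4 * q + 3 * q ^ 2 + 5 * q ^ 3) + (-1 : F) * c ^ (4 + 4 * q + 4 * q ^ 2 + 3 * q ^ 3) + (-3 : F) * c ^ (4 + 4 * q + 4 * q ^ 2 + 4 * q ^ 3) + (-3 : F) * c ^ (4 + 4 * q + 4 * q ^ 2 + 5 * q ^ 3) + (-1 : F) * c ^ (4 + 4 * q + 4 * q ^ 2 + 6 * q ^ 3) + (-1 : F) * c ^ (5 + 3 * q + 3 * q ^ 2 + 3 * q ^ 3) + (-1 : F) * c ^ (5 + 3 * q + 4 * q ^ 2 + 3 * q ^ 3) + (-1 : F) * c ^ (5 + 3 * q + 4 * q ^ 2 + 4 * q ^ 3) + (-2 : F) *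 c ^ (5 + 3 * q + 5 * q ^ 2 + 5 * q ^ 3) + (-1 : F) * c ^ (5 + 4 * q + 3 * q ^ 2 + 4 * q ^ 3) + (-2 : F) * c ^ (5 + 4 * q + 4 * q ^ 2 + 3 * q ^ 3) + (-4 : F) * c ^ (5 + 4 * q + 4 * q ^ 2 + 4 * q ^ 3) + (-2 : F) * c ^ (5 + 4 * q + 4 * q ^ 2 + 5 * q ^ 3) + (-1 : F) * c ^ (5 + 4 * q + 5 * q ^ 2 + 4 * q ^ 3) + (-1 : F) * c ^ (5 + 4 * q + 5 * q ^ 2 + 5 * q ^ 3) + (-1 : F) * c ^ (5 + 5 * q + 4 * q ^ 2 + 4 * q ^ 3) + (-1 : F) * c ^ (5 + 5 * q + 4 * q ^ 2 + 5 * q ^ 3) + (-1 : F) * c ^ (5 + 5 * q + 5 * q ^ 2 + 4 * q ^ 3) + (-1 : F) * c ^ (6 + 3 * q + 5 * q ^ 2 + 4 * q ^ 3) + (-1 : F) * c ^ (6 + 4 * q + 4 * q ^ 2 + 3 * q ^ 3) + (-1 : F) * c ^ (6 + 4 * q + 4 * q ^ 2 + 4 * q ^ 3) + (-1 : F) * c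 ^ (6 + 4 * q + 5 * q ^ 2 + 4 * q ^ 3) + (-1 : F) * c ^ (6 + 5 * q + 4 * q ^ 2 + 4 * q ^ 3)) * htwo
  exact mul_ne_zero (pow_ne_zero _ hc0)
    (mul_ne_zero (pow_ne_zero _ hF3) (mul_ne_zero (pow_ne_zero _ hF5) (pow_ne_zero _ hF5))) key
end
end

section
/- The polynomial G = X₀²X₁²X₂X₃ + X₀X₁²X₂²X₃ + X₀X₁X₂²X₃² + X₀²X₁X₂ + X₁X₂X₃² + X₀X₁X₂ + X₀X₁X₃ + X₀X₂X₃ + X₁X₂X₃ + X₀ + X₃ + 1, with coefficients in 𝔽₂ and variables X₀, X₁, X₂, X₃, is absolutely irreducible: viewed as an element of K[X₀,X₁,X₂,X₃] where K is an algebraic closure of 𝔽₂, G is irreducible. -/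
/-!
Regard `G` as a quadratic `G₂ X₀² + G₁ X₀ + G₀` in `X₀` over the UFD `k[X₁, X₂, X₃]`.
It is primitive because `G₂ = X₁ X₂ (X₁ X₃ + 1)` is coprime to `G₀`: each of the three
irreducible factors of `G₂` has a zero at which `G₀` does not vanish. A factorisation
`(p X₀ + q) (r X₀ + s)` would split the middle coefficient as `G₁ = u + v` with `u v = G₂ G₀`.
As polynomials in `X₁`, `G₂ G₀` has degree `3`, so one of `u`, `v` is linear in `X₁`; its
`X₁`-coefficient is forced by comparing the coefficients of `X₁³`, and then the coefficients
of `X₁²` disagree at `X₂ = 0`, `X₃ = t` for any `t ∉ {0, -1}`. Nothing here depends on the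
characteristic: `G` is irreducible over every infinite field.
-/

namespace Polynomial

theorem natDegree_le_or_natDegree_le_of_natDegree_mul_le {R : Type*} [Semiring R]
    [NoZeroDivisors R] {p q : R[X]} {n : ℕ} (h : (p * q).natDegree ≤ 2 * n + 1) :
    p.natDegree ≤ n ∨ q.natDegree ≤ n := by
  rcases eq_or_ne p 0 with rfl | hp
  · simp
  rcases eq_or_ne q 0 with rfl | hq
  · simp
  rw [natDegree_mul hp hq] at h
  omega

variable {R : Type*} [CommRing R]

theorem isPrimitive_C_mul_X_sq_add_C_mul_X_add_C {a b c : R} (hac : IsRelPrime a c) :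
    (C a * X ^ 2 + C b * X + C c).IsPrimitive := fun r hr => by
  rw [C_dvd_iff_dvd_coeff] at hr
  exact hac (by simpa using hr 2) (by simpa using hr 0)

variable [IsDomain R]

/-- `hsplit` rules out a factorisation `(p X + q) (r X + s)`, whose middle coefficient is
`p s + q r` with `(p s) (q r) = a c`. -/
theorem irreducible_C_mul_X_sq_add_C_mul_X_add_C {a b c : R}
    (hprim : (C a * X ^ 2 + C b * X + C c).IsPrimitive)
    (hsplit : ∀ u v, u + v = b → u * v ≠ a * c) :
    Irreducible (C a * X ^ 2 + C b * X + C c) := by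
  have ha : a ≠ 0 := by
    rintro rfl
    exact hsplit b 0 (add_zero b) (by simp)
  have hdeg : (C a * X ^ 2 + C b * X + C c).natDegree = 2 := by compute_degree!
  refine ⟨fun hu => by simp [natDegree_eq_zero_of_isUnit hu] at hdeg, fun f g hfg => ?_⟩
  have hf : f ≠ 0 := by rintro rfl; simp_all
  have hg : g ≠ 0 := by rintro rfl; simp_all
  have hsum : f.natDegree + g.natDegree = 2 := by rw [← natDegree_mul hf hg, ← hfg, hdeg]
  have unit_of_natDegree_eq_zero : ∀ h : R[X], h ∣ C a * X ^ 2 + C b * X + C c →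
      h.natDegree = 0 → IsUnit h := fun h hdvd h0 => by
    rw [eq_C_of_natDegree_eq_zero h0] at hdvd ⊢
    exact (hprim _ hdvd).map C
  rcases Nat.eq_zero_or_pos f.natDegree with hf0 | hf0
  · exact Or.inl (unit_of_natDegree_eq_zero f (hfg ▸ dvd_mul_right f g) hf0)
  rcases Nat.eq_zero_or_pos g.natDegree with hg0 | hg0
  · exact Or.inr (unit_of_natDegree_eq_zero g (hfg ▸ dvd_mul_left g f) hg0)
  obtain ⟨p, q, rfl⟩ := exists_eq_X_add_C_of_natDegree_le_one (p := f) (by omega)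
  obtain ⟨r, s, rfl⟩ := exists_eq_X_add_C_of_natDegree_le_one (p := g) (by omega)
  have hfg' : C a * X ^ 2 + C b * X + C c
      = C (p * r) * X ^ 2 + C (p * s + q * r) * X + C (q * s) := by
    rw [hfg]; simp only [map_add, map_mul]; ring
  have h2 := congrArg (coeff · 2) hfg'
  have h1 := congrArg (coeff · 1) hfg'
  have h0 := congrArg (coeff · 0) hfg'
  simp only [coeff_add, coeff_C_mul_X_pow, coeff_C_mul_X, coeff_C] at h2 h1 h0
  norm_num at h2 h1 h0
  exact absurd (by rw [h2, h0]; ring) (hsplit (p * s) (q * r) h1.symm)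

end Polynomial

open MvPolynomial

section
variable (R : Type*) [CommRing R]

noncomputable def G : MvPolynomial (Fin 4) R :=
  (X 0) ^ 2 * (X 1) ^ 2 * (X 2) * (X 3) + (X 0) * (X 1) ^ 2 * (X 2) ^ 2 * (X 3)
    + (X 0) * (X 1) * (X 2) ^ 2 * (X 3) ^ 2 + (X 0) ^ 2 * (X 1) * (X 2)
    + (X 1) * (X 2) * (X 3) ^ 2 + (X 0) * (X 1) * (X 2) + (X 0) * (X 1) * (X 3)
    + (X 0) * (X 2) * (X 3) + (X 1) * (X 2) * (X 3) + X 0 + X 3 + 1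

/-! `G₂`, `G₁`, `G₀` are the coefficients of `X 0 ^ 2`, `X 0`, `1` in `G`, written in the variables
`X 0, X 1, X 2` that `finSuccEquiv` uses for `X 1, X 2, X 3`. -/

noncomputable def G₂ : MvPolynomial (Fin 3) R := X 0 * X 1 * (X 0 * X 2 + 1)

noncomputable def G₁ : MvPolynomial (Fin 3) R :=
  X 0 ^ 2 * X 1 ^ 2 * X 2 + X 0 * X 1 ^ 2 * X 2 ^ 2 + X 0 * X 1 + X 0 * X 2 + X 1 * X 2 + 1

noncomputable def G₀ : MvPolynomial (Fin 3) R := X 0 * X 1 * X 2 ^ 2 + X 0 * X 1 * X 2 + X 2 + 1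

theorem finSuccEquiv_G :
    finSuccEquiv R 3 (G R)
      = Polynomial.C (G₂ R) * Polynomial.X ^ 2 + Polynomial.C (G₁ R) * Polynomial.X
        + Polynomial.C (G₀ R) := by
  simp only [G, G₂, G₁, G₀, show (1 : Fin 4) = Fin.succ 0 from rfl,
    show (2 : Fin 4) = Fin.succ 1 from rfl, show (3 : Fin 4) = Fin.succ 2 from rfl,
    map_add, map_mul, map_pow, map_one, finSuccEquiv_X_zero, finSuccEquiv_X_succ]
  ring

theorem finSuccEquiv_G₁ :
    finSuccEquiv R 2 (G₁ R)
      = Polynomial.C (X 0 ^ 2 * X 1) * Polynomial.X ^ 2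
        + Polynomial.C (X 0 ^ 2 * X 1 ^ 2 + X 0 + X 1) * Polynomial.X
        + Polynomial.C (X 0 * X 1 + 1) := by
  simp only [G₁, show (1 : Fin 3) = Fin.succ 0 from rfl, show (2 : Fin 3) = Fin.succ 1 from rfl,
    map_add, map_mul, map_pow, map_one, finSuccEquiv_X_zero, finSuccEquiv_X_succ]
  ring

theorem finSuccEquiv_G₂_mul_G₀ :
    finSuccEquiv R 2 (G₂ R * G₀ R)
      = Polynomial.C (X 0 ^ 2 * X 1 * (X 1 ^ 2 + X 1)) * Polynomial.X ^ 3
        + Polynomial.C (X 0 ^ 2 * X 1 ^ 2 + X 0 ^ 2 * X 1 + X 0 * X 1 ^ 2 + X 0 * X 1)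
          * Polynomial.X ^ 2
        + Polynomial.C (X 0 * X 1 + X 0) * Polynomial.X := by
  simp only [G₂, G₀, show (1 : Fin 3) = Fin.succ 0 from rfl,
    show (2 : Fin 3) = Fin.succ 1 from rfl,
    map_add, map_mul, map_pow, map_one, finSuccEquiv_X_zero, finSuccEquiv_X_succ]
  ring

theorem exists_ne_zero_add_one_ne_zero [Infinite R] : ∃ t : R, t ≠ 0 ∧ t + 1 ≠ 0 := by
  classical
  obtain ⟨t, ht⟩ := Infinite.exists_notMem_finset ({0, -1} : Finset R)
  refine ⟨t, fun h => ht (by simp [h]), fun h => ht (by simp [eq_neg_of_add_eq_zero_left h])⟩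

variable [IsDomain R]

theorem linear_mul_finSuccEquiv_G₁_sub_ne [Infinite R] (α β : MvPolynomial (Fin 2) R) :
    (Polynomial.C α * Polynomial.X + Polynomial.C β)
        * (finSuccEquiv R 2 (G₁ R) - (Polynomial.C α * Polynomial.X + Polynomial.C β))
      ≠ finSuccEquiv R 2 (G₂ R * G₀ R) := by
  intro h
  rw [finSuccEquiv_G₁, finSuccEquiv_G₂_mul_G₀] at h
  set x : MvPolynomial (Fin 2) R := X 0
  set y : MvPolynomial (Fin 2) R := X 1
  have hexp : (Polynomial.C α * Polynomial.X + Polynomial.C β)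
      * (Polynomial.C (x ^ 2 * y) * Polynomial.X ^ 2
        + Polynomial.C (x ^ 2 * y ^ 2 + x + y) * Polynomial.X
        + Polynomial.C (x * y + 1) - (Polynomial.C α * Polynomial.X + Polynomial.C β))
      = Polynomial.C (α * (x ^ 2 * y)) * Polynomial.X ^ 3
        + Polynomial.C (α * (x ^ 2 * y ^ 2 + x + y - α) + β * (x ^ 2 * y)) * Polynomial.X ^ 2
        + Polynomial.C (α * (x * y + 1 - β) + β * (x ^ 2 * y ^ 2 + x + y - α)) * Polynomial.X
        + Polynomial.C (β * (x * y + 1 - β)) := by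
    simp only [map_mul, map_sub, map_add]; ring
  rw [hexp] at h
  have h3 := congrArg (Polynomial.coeff · 3) h
  have h2 := congrArg (Polynomial.coeff · 2) h
  simp only [Polynomial.coeff_add, Polynomial.coeff_C_mul_X_pow, Polynomial.coeff_C_mul_X,
    Polynomial.coeff_C] at h3 h2
  norm_num at h3 h2
  have hα : α = y ^ 2 + y := mul_right_cancel₀ (by simp [x, y, X_ne_zero]) (h3.trans (mul_comm _ _))
  obtain ⟨t, ht₀, ht₁⟩ := exists_ne_zero_add_one_ne_zero R
  have h2t := congrArg (eval ![0, t]) h2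
  simp only [hα, x, y, map_add, map_mul, map_sub, map_pow, eval_X, Matrix.cons_val_zero,
    Matrix.cons_val_one, Matrix.cons_val_fin_one] at h2t
  exact mul_ne_zero (mul_ne_zero ht₀ ht₁) (pow_ne_zero 2 ht₀) (by linear_combination -h2t)

theorem mul_ne_G₂_mul_G₀_of_add_eq_G₁ [Infinite R] {u v : MvPolynomial (Fin 3) R}
    (h : u + v = G₁ R) : u * v ≠ G₂ R * G₀ R := by
  intro huv
  have hsum : finSuccEquiv R 2 u + finSuccEquiv R 2 v = finSuccEquiv R 2 (G₁ R) := by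
    rw [← map_add, h]
  have hprod : finSuccEquiv R 2 u * finSuccEquiv R 2 v = finSuccEquiv R 2 (G₂ R * G₀ R) := by
    rw [← map_mul, huv]
  have hdeg : (finSuccEquiv R 2 u * finSuccEquiv R 2 v).natDegree ≤ 2 * 1 + 1 := by
    rw [hprod, finSuccEquiv_G₂_mul_G₀]; compute_degree
  obtain ⟨p, hp, hpq⟩ : ∃ p, p.natDegree ≤ 1 ∧ p * (finSuccEquiv R 2 (G₁ R) - p)
      = finSuccEquiv R 2 (G₂ R * G₀ R) := by
    rcases Polynomial.natDegree_le_or_natDegree_le_of_natDegree_mul_le hdeg with h | h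
    · exact ⟨_, h, by rw [← hprod, ← hsum, add_sub_cancel_left]⟩
    · exact ⟨_, h, by rw [← hprod, ← hsum, add_sub_cancel_right, mul_comm]⟩
  obtain ⟨α, β, rfl⟩ := Polynomial.exists_eq_X_add_C_of_natDegree_le_one hp
  exact linear_mul_finSuccEquiv_G₁_sub_ne R α β hpq

theorem irreducible_X_zero_mul_X_two_add_one :
    Irreducible (X 0 * X 2 + 1 : MvPolynomial (Fin 3) R) := by
  rw [← MulEquiv.irreducible_iff (finSuccEquiv R 2).toMulEquiv]
  have hψ : finSuccEquiv R 2 (X 0 * X 2 + 1)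
      = Polynomial.C (X 1) * Polynomial.X + Polynomial.C 1 := by
    simp only [show (2 : Fin 3) = Fin.succ 1 from rfl, map_add, map_mul, map_one,
      finSuccEquiv_X_zero, finSuccEquiv_X_succ]
    ring
  exact hψ ▸ Polynomial.irreducible_C_mul_X_add_C (X_ne_zero 1) isRelPrime_one_right

end

section
variable (k : Type*) [Field k] [Infinite k]

theorem isRelPrime_G₂_G₀ : IsRelPrime (G₂ k) (G₀ k) := by
  have not_dvd_G₀ : ∀ (q : MvPolynomial (Fin 3) k) (a : Fin 3 → k),
      eval a q = 0 → eval a (G₀ k) ≠ 0 → ¬ q ∣ G₀ k := fun q a hq hG hdvd =>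
    hG (zero_dvd_iff.mp (hq ▸ map_dvd (eval a) hdvd))
  have isRelPrime_X : ∀ i, IsRelPrime (X i) (G₀ k) := fun i =>
    X_prime.irreducible.isRelPrime_iff_not_dvd.mpr (not_dvd_G₀ _ 0 (by simp) (by simp [G₀]))
  obtain ⟨t, ht₀, ht₁⟩ := exists_ne_zero_add_one_ne_zero k
  refine .mul_left (.mul_left (isRelPrime_X 0) (isRelPrime_X 1)) ?_
  refine (irreducible_X_zero_mul_X_two_add_one k).isRelPrime_iff_not_dvd.mpr
    (not_dvd_G₀ _ ![-t⁻¹, 0, t] ?_ ?_)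
  · simp [ht₀]
  · simpa [G₀] using ht₁

theorem irreducible_G : Irreducible (G k) := by
  rw [← MulEquiv.irreducible_iff (finSuccEquiv k 3).toMulEquiv]
  change Irreducible (finSuccEquiv k 3 (G k))
  rw [finSuccEquiv_G]
  exact Polynomial.irreducible_C_mul_X_sq_add_C_mul_X_add_C
    (Polynomial.isPrimitive_C_mul_X_sq_add_C_mul_X_add_C (isRelPrime_G₂_G₀ k))
    fun _ _ => mul_ne_G₂_mul_G₀_of_add_eq_G₁ k

end

open MvPolynomial in
theorem statement17 :
    Irreducible
      ((X 0) ^ 2 * (X 1) ^ 2 * (X 2) * (X 3) + (X 0) * (X 1) ^ 2 * (X 2) ^ 2 * (X 3)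
        + (X 0) * (X 1) * (X 2) ^ 2 * (X 3) ^ 2 + (X 0) ^ 2 * (X 1) * (X 2)
        + (X 1) * (X 2) * (X 3) ^ 2 + (X 0) * (X 1) * (X 2) + (X 0) * (X 1) * (X 3)
        + (X 0) * (X 2) * (X 3) + (X 1) * (X 2) * (X 3) + X 0 + X 3 + 1 :
        MvPolynomial (Fin 4) (AlgebraicClosure (ZMod 2))) :=
  irreducible_G _
end

section
/- Let q be a power of 2, let F be a finite field with q^6 elements, and let c ∈ F. For (x₀,x₁,x₂,x₃,x₄,x₅) ∈ F⁶ let P(x₀,...,x₅) be the determinant of the 6×6 matrix with rows (x₀, 1, 0, 1, 0, c), (c^q, x₁, 1, 0, 1, 0), (0, c^{q²}, x₂, 1, 0, 1), (1, 0, c^{q³}, x₃, 1, 0), (0, 1, 0, c^{q⁴}, x₄, 1), (1, 0, 1, 0, c^{q⁵}, x₅); for d ∈ F and y₁,y₂,y₃,y₄ ∈ F let G(d; y₁,y₂,y₃,y₄) be the determinant of the 5×5 matrix with rows (1, 0, 1, 0, d), (y₁, 1, 0, 1, 0), (d^{q²}, y₂, 1, 0, 1), (0, d^{q³}, y₃,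 1, 0), (1, 0, d^{q⁴}, y₄, 1); and for j = 0,...,5 let Q_j(x₀,...,x₅) = G(c^{q^j}; x_{(1+j) mod 6}, x_{(2+j) mod 6}, x_{(3+j) mod 6}, x_{(4+j) mod 6}). If neither the tuple (0,0,0,0,0,0) nor any tuple (x₀,...,x₅) with all coordinates nonzero satisfies simultaneously P = 0 and Q_j = 0 for all j = 0,...,5, then the map f_c : F → F defined by f_c(x) = x^q + x^{q^3} + c·x^{q^5} is scattered. -/
noncomputable section

def Pdet (q : ℕ) {F : Type*} [Field F] (c : F) (x : Fin 6 → F) : F :=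
  Matrix.det !![x 0, 1, 0, 1, 0, c;
    c ^ q, x 1, 1, 0, 1, 0;
    0, c ^ (q ^ 2), x 2, 1, 0, 1;
    1, 0, c ^ (q ^ 3), x 3, 1, 0;
    0, 1, 0, c ^ (q ^ 4), x 4, 1;
    1, 0, 1, 0, c ^ (q ^ 5), x 5]

def Gdet (q : ℕ) {F : Type*} [Field F] (d y1 y2 y3 y4 : F) : F :=
  Matrix.det !![1, 0, 1, 0, d;
    y1, 1, 0, 1, 0;
    d ^ (q ^ 2), y2, 1, 0, 1;
    0, d ^ (q ^ 3), y3, 1, 0;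
    1, 0, d ^ (q ^ 4), y4, 1]

open Fin.NatCast in
def Qdet (q : ℕ) {F : Type*} [Field F] (c : F) (j : ℕ) (x : Fin 6 → F) : F :=
  Gdet q (c ^ (q ^ j)) (x ((1 + j : ℕ) : Fin 6)) (x ((2 + j : ℕ) : Fin 6))
    (x ((3 + j : ℕ) : Fin 6)) (x ((4 + j : ℕ) : Fin 6))


/-! Suppose `f y / y = f z / z = m` with `y / z ∉ 𝔽_q`. In characteristic 2 both `y` and `z` are
roots of `m X + f`, so applying the Frobenius `x ↦ x ^ q ^ t` shows that their Frobenius vectors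
`(u ^ q ^ i)ᵢ` are two independent kernel vectors of the Dickson matrix of `m X + f`. Hence this
matrix has rank at most 4: its determinant `P` and all its `5 × 5` minors vanish. `Q₀` is one of
these minors and `Q_j` is its `q ^ j`-th power. Finally the diagonal `(m ^ q ^ i)ᵢ` is either zero
or has no zero entry, contradicting one of the two hypotheses. -/

open Matrix

section Rank

variable {K : Type*} [Field K] {m n ι : Type*} [Fintype n] [Fintype ι]

theorem Matrix.rank_add_card_le_of_mulVec_eq_zero (A : Matrix m n K) {v : ι → n → K}
    (hv : LinearIndependent K v) (hA : ∀ i, A *ᵥ v i = 0) :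
    A.rank + Fintype.card ι ≤ Fintype.card n := by
  have hker : Fintype.card ι ≤ Module.finrank K (LinearMap.ker A.mulVecLin) := by
    rw [← finrank_span_eq_card hv]
    exact Submodule.finrank_mono (Submodule.span_le.mpr (Set.range_subset_iff.mpr hA))
  have := A.mulVecLin.finrank_range_add_finrank_ker
  rw [Module.finrank_fintype_fun_eq_card] at this
  exact this ▸ Nat.add_le_add_left hker _

theorem Matrix.det_submatrix_eq_zero_of_rank_lt [DecidableEq ι] (A : Matrix m n K)
    (r : ι → m) (s : ι → n) (h : A.rank < Fintype.card ι) : (A.submatrix r s).det = 0 := by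
  by_contra hdet
  have := (A.submatrix r s).rank_of_det_ne_zero hdet
  have := A.rank_submatrix_le r s
  omega

end Rank

section Frobenius

variable {F : Type*} [Field F] {q : ℕ}

theorem iterateFrobenius_mul_eq_pow_pow {R : Type*} [CommSemiring R] {p e : ℕ} [ExpChar R p]
    (hq : q = p ^ e) (t : ℕ) (x : R) : iterateFrobenius R p (e * t) x = x ^ q ^ t := by
  rw [iterateFrobenius_def, pow_mul, hq]

theorem pow_pow_mod_eq [Fintype F] {n : ℕ} (hF : Fintype.card F = q ^ n) (x : F) (k : ℕ) :
    x ^ q ^ (k % n) = x ^ q ^ k := by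
  conv_rhs => rw [← Nat.div_add_mod k n, pow_add, pow_mul q n, ← hF, pow_mul,
    FiniteField.pow_card_pow]

def frobVec (q n : ℕ) (u : F) : Fin n → F := fun i => u ^ q ^ (i : ℕ)

theorem frobVec_ne_zero {n : ℕ} {u : F} (hu : u ≠ 0) : frobVec q (n + 1) u ≠ 0 :=
  fun h => hu (by simpa [frobVec] using congrFun h 0)

theorem linearIndependent_frobVec_pair {n : ℕ} {y z : F} (hz : z ≠ 0)
    (h : ∀ l : F, l ^ q = l → y ≠ l * z) :
    LinearIndependent F ![frobVec q (n + 2) z, frobVec q (n + 2) y] := by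
  rw [LinearIndependent.pair_iff' (frobVec_ne_zero hz)]
  intro a ha
  have h0 : a * z = y := by simpa [frobVec] using congrFun ha 0
  have h1 : a * z ^ q = y ^ q := by simpa [frobVec] using congrFun ha 1
  refine h a ?_ h0.symm
  refine mul_right_cancel₀ (pow_ne_zero q hz) ?_
  rw [← mul_pow, h0, h1]

end Frobenius

section Dickson

variable {F : Type*} [Field F] {q : ℕ}

/-- For `x = frobVec q 6 m` this is the Dickson matrix of
`m X + X ^ q + X ^ q ^ 3 + c X ^ q ^ 5`. -/
def dicksonMatrix (q : ℕ) (c : F) (x : Fin 6 → F) : Matrix (Fin 6) (Fin 6) F :=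
  !![x 0, 1, 0, 1, 0, c;
    c ^ q, x 1, 1, 0, 1, 0;
    0, c ^ (q ^ 2), x 2, 1, 0, 1;
    1, 0, c ^ (q ^ 3), x 3, 1, 0;
    0, 1, 0, c ^ (q ^ 4), x 4, 1;
    1, 0, 1, 0, c ^ (q ^ 5), x 5]

theorem Pdet_eq_det_dicksonMatrix (c : F) (x : Fin 6 → F) :
    Pdet q c x = (dicksonMatrix q c x).det := rfl

open Fin.NatCast in
theorem Qdet_zero_eq_det_submatrix (c : F) (x : Fin 6 → F) :
    Qdet q c 0 x = ((dicksonMatrix q c x).submatrix Fin.castSucc Fin.succ).det := by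
  have h1 : ((1 + 0 : ℕ) : Fin 6) = 1 := rfl
  rw [Qdet, Gdet, h1]
  congr 1
  ext a b
  fin_cases a <;> fin_cases b <;> simp [dicksonMatrix]

theorem RingHom.map_Gdet {K : Type*} [Field K] (φ : F →+* K) (d y₁ y₂ y₃ y₄ : F) :
    φ (Gdet q d y₁ y₂ y₃ y₄) = Gdet q (φ d) (φ y₁) (φ y₂) (φ y₃) (φ y₄) := by
  rw [Gdet, Gdet, RingHom.map_det]
  congr 1
  ext a b
  fin_cases a <;> fin_cases b <;> simp

theorem Qdet_frobVec [Fintype F] (hF : Fintype.card F = q ^ 6) {j : ℕ} (φ : F →+* F)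
    (hφ : ∀ x, φ x = x ^ q ^ j) (c m : F) :
    Qdet q c j (frobVec q 6 m) = φ (Qdet q c 0 (frobVec q 6 m)) := by
  simp only [Qdet, φ.map_Gdet, hφ, frobVec, Fin.val_natCast, pow_pow_mod_eq hF, ← pow_mul,
    ← pow_add]
  simp

end Dickson

section Kernel

variable {F : Type*} [Field F] [Fintype F] [CharP F 2] {q e : ℕ}

theorem frobenius_conj_eq_zero (hq : q = 2 ^ e) (hF : Fintype.card F = q ^ 6) {c m u : F}
    (hu : u ^ q + u ^ q ^ 3 + c * u ^ q ^ 5 = m * u) (t : ℕ) :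
    m ^ q ^ t * u ^ q ^ t + u ^ q ^ ((t + 1) % 6) + u ^ q ^ ((t + 3) % 6)
      + c ^ q ^ t * u ^ q ^ ((t + 5) % 6) = 0 := by
  have h := congrArg (iterateFrobenius F 2 (e * t)) hu
  simp only [map_add, map_mul] at h
  simp only [iterateFrobenius_mul_eq_pow_pow hq, ← pow_mul, ← pow_succ', ← pow_add] at h
  simp only [pow_pow_mod_eq hF, add_comm t]
  linear_combination h + CharTwo.add_self_eq_zero (m ^ q ^ t * u ^ q ^ t)

theorem dicksonMatrix_mulVec_frobVec (hq : q = 2 ^ e) (hF : Fintype.card F = q ^ 6)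
    {c m u : F} (hu : u ^ q + u ^ q ^ 3 + c * u ^ q ^ 5 = m * u) :
    dicksonMatrix q c (frobVec q 6 m) *ᵥ frobVec q 6 u = 0 := by
  have row := frobenius_conj_eq_zero hq hF hu
  ext i
  have := row i
  fin_cases i <;>
    simp [dicksonMatrix, frobVec, mulVec, dotProduct, Fin.sum_univ_six] at this ⊢ <;>
    linear_combination this

end Kernel

theorem statement18_general (e q : ℕ) (hq : q = 2 ^ e)
    (F : Type) [Field F] [Fintype F] (hF : Fintype.card F = q ^ 6) (c : F)
    (h0 : ¬ (Pdet q c (fun _ => 0) = 0 ∧ ∀ j : ℕ, j < 6 → Qdet q c j (fun _ => 0) = 0))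
    (hx : ∀ x : Fin 6 → F, (∀ i, x i ≠ 0) →
      ¬ (Pdet q c x = 0 ∧ ∀ j : ℕ, j < 6 → Qdet q c j x = 0)) :
    IsScattered q (fun x : F => x ^ q + x ^ (q ^ 3) + c * x ^ (q ^ 5)) := by
  have : Fact (Nat.Prime 2) := ⟨Nat.prime_two⟩
  have : CharP F 2 := charP_of_card_eq_prime_pow (f := e * 6) (by rw [hF, hq, pow_mul])
  intro y z _ hz hyz
  beta_reduce at hyz
  by_contra! hyz_indep
  set m := (z ^ q + z ^ q ^ 3 + c * z ^ q ^ 5) / z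
  have hmz : z ^ q + z ^ q ^ 3 + c * z ^ q ^ 5 = m * z := (div_mul_cancel₀ _ hz).symm
  have hmy : y ^ q + y ^ q ^ 3 + c * y ^ q ^ 5 = m * y :=
    mul_right_cancel₀ hz (by rw [hyz, hmz]; ring)
  set D := dicksonMatrix q c (frobVec q 6 m)
  have hrank : D.rank < 5 := by
    have := D.rank_add_card_le_of_mulVec_eq_zero (linearIndependent_frobVec_pair hz hyz_indep)
      (Fin.forall_fin_two.mpr
        ⟨dicksonMatrix_mulVec_frobVec hq hF hmz, dicksonMatrix_mulVec_frobVec hq hF hmy⟩)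
    simp only [Fintype.card_fin] at this
    omega
  have hP : Pdet q c (frobVec q 6 m) = 0 := by
    rw [Pdet_eq_det_dicksonMatrix]
    simpa using D.det_submatrix_eq_zero_of_rank_lt id id (by rw [Fintype.card_fin]; omega)
  have hQ₀ : Qdet q c 0 (frobVec q 6 m) = 0 := by
    rw [Qdet_zero_eq_det_submatrix]
    exact D.det_submatrix_eq_zero_of_rank_lt _ _ (by rw [Fintype.card_fin]; exact hrank)
  have hQ : ∀ j : ℕ, j < 6 → Qdet q c j (frobVec q 6 m) = 0 := fun j _ => by
    rw [Qdet_frobVec hF (iterateFrobenius F 2 (e * j)) (iterateFrobenius_mul_eq_pow_pow hq j),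
      hQ₀, map_zero]
  by_cases hm : m = 0
  · have hq0 : q ≠ 0 := hq ▸ pow_ne_zero e two_ne_zero
    have : frobVec q 6 m = fun _ => 0 := funext fun i => by simp [frobVec, hm, hq0]
    exact h0 (this ▸ ⟨hP, hQ⟩)
  · exact hx _ (fun i => pow_ne_zero _ hm) ⟨hP, hQ⟩

theorem statement18 (e q : ℕ) (he : 1 ≤ e) (hq : q = 2 ^ e)
    (F : Type) [Field F] [Fintype F] (hF : Fintype.card F = q ^ 6) (c : F)
    (h0 : ¬ (Pdet q c (fun _ => 0) = 0 ∧ ∀ j : ℕ, j < 6 → Qdet q c j (fun _ => 0) = 0))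
    (hx : ∀ x : Fin 6 → F, (∀ i, x i ≠ 0) →
      ¬ (Pdet q c x = 0 ∧ ∀ j : ℕ, j < 6 → Qdet q c j x = 0)) :
    IsScattered q (fun x : F => x ^ q + x ^ (q ^ 3) + c * x ^ (q ^ 5)) :=
  statement18_general e q hq F hF c h0 hx
end
end

section
/- There exists a constant Q such that for every power of two q = 2^e with q ≥ Q, every finite field F with q^6 elements and every c ∈ 𝔠, the 𝔽_q-subspace U_c = {(x, x^q + x^{q^3} + c·x^{q^5}) : x ∈ F} of F × F is not the image of any of the previously known maximum scattered subspaces under any invertible semilinear map of F × F; concretely, for every field automorphism ρ of F and all A, B, C, D ∈ F with A·D − B·C ≠ 0: (a) for every s ∈ {1,5}, {(A·ρ(x) + B·ρ(x)^{q^s}, C·ρ(x) + D·ρ(x)^{q^s}) : x ∈ F} ≠ U_c; (b) for every s ∈ {1,5} and every δ ∈ F with δ^{q^5+q^4+q^3+q^2+q+1} ∉ {0,1}, {(A·ρ(x) + B·ρ(δ·x^{q^s} + x^{q^{6−s}}), C·ρ(x) + D·ρ(δ·x^{q^s} + x^{q^{6−s}})) : x ∈ F} ≠ U_c; (c) for every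 s ∈ {1,2,4,5} and every δ ∈ F with δ^{q^3+1} ∉ {0,1}, {(A·ρ(x) + B·ρ(δ·x^{q^s} + x^{q^{s+3}}), C·ρ(x) + D·ρ(δ·x^{q^s} + x^{q^{s+3}})) : x ∈ F} ≠ U_c. -/
/-!
If `U_c` were the image of a known subspace `{(x, f x)}` under `x ↦ (A x^ρ + B f(x)^ρ,
C x^ρ + D f(x)^ρ)`, then substituting `y = x^ρ` gives the identity of functions
`C y + D f^ρ(y) = L_c (A y + B f^ρ(y))` with `L_c x = x^q + x^{q^3} + c x^{q^5}`.
Reducing exponents with `y^{q^6} = y`, both sides are `q`-polynomials of `q`-degree `< 6`, whose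
coefficients are determined by the function because a nonzero polynomial of degree `< q^6`
cannot vanish on all of `F`. Comparing two or three coefficients gives `A = B = 0`, contradicting
invertibility, except for `δ x^{q^s} + x^{q^{6-s}}`, where it gives `A = D = 0` and
`(B δ^ρ)^{q^i} = B^{q^j}`; taking norms to `𝔽_q` then forces `N(δ) = 1`.
-/

noncomputable section

open Polynomial in
theorem eq_zero_of_forall_sum_mul_pow_pow_eq_zero {F : Type*} [Field F] [Fintype F] {q n : ℕ}
    (hq : 1 < q) (hcard : Fintype.card F = q ^ n) (a : Fin n → F)
    (h : ∀ y : F, ∑ i, a i * y ^ q ^ (i : ℕ) = 0) : a = 0 := by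
  obtain _ | n := n
  · exact Subsingleton.elim _ _
  set P : F[X] := ∑ i, C (a i) * X ^ q ^ (i : ℕ)
  have hdeg : P.natDegree < Fintype.card F := by
    refine (natDegree_sum_le_of_forall_le _ _ fun i _ => ?_).trans_lt
      (hcard ▸ Nat.pow_lt_pow_right hq n.lt_succ_self)
    exact (natDegree_C_mul_X_pow_le _ _).trans (Nat.pow_le_pow_right (by omega) (by omega))
  have hP : P = 0 := eq_zero_of_natDegree_lt_card_of_eval_eq_zero P Function.injective_id
    (fun y => by simpa [P, eval_finsetSum] using h y) hdeg
  have hinj : Function.Injective fun i : Fin (n + 1) => q ^ (i : ℕ) :=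
    (Nat.pow_right_injective hq).comp Fin.val_injective
  funext j
  simpa [P, finsetSum_coeff, coeff_C_mul_X_pow, hinj.eq_iff] using
    congrArg (coeff · (q ^ (j : ℕ))) hP

theorem eq_zero_of_forall_linearized_six_eq_zero {F : Type*} [Field F] [Fintype F] {q : ℕ}
    (hq : 1 < q) (hcard : Fintype.card F = q ^ 6) {a₀ a₁ a₂ a₃ a₄ a₅ : F}
    (h : ∀ y : F, a₀ * y + a₁ * y ^ q + a₂ * y ^ q ^ 2 + a₃ * y ^ q ^ 3 + a₄ * y ^ q ^ 4
      + a₅ * y ^ q ^ 5 = 0) :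
    a₀ = 0 ∧ a₁ = 0 ∧ a₂ = 0 ∧ a₃ = 0 ∧ a₄ = 0 ∧ a₅ = 0 := by
  have := eq_zero_of_forall_sum_mul_pow_pow_eq_zero hq hcard ![a₀, a₁, a₂, a₃, a₄, a₅]
    (by simpa [Fin.sum_univ_six] using h)
  simpa [funext_iff, Fin.forall_fin_succ] using this

section Frobenius

variable {F : Type*} [Field F] {p e q : ℕ} [ExpChar F p]

theorem add_pow_of_eq_expChar_pow (hq : q = p ^ e) (u v : F) : (u + v) ^ q = u ^ q + v ^ q := by
  subst hq; exact add_pow_expChar_pow ..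

theorem add_pow_pow_of_eq_expChar_pow (hq : q = p ^ e) (i : ℕ) (u v : F) :
    (u + v) ^ q ^ i = u ^ q ^ i + v ^ q ^ i := by
  rw [hq, ← pow_mul]; exact add_pow_expChar_pow ..

end Frobenius

section CardPowSix

variable {F : Type*} [Field F] [Fintype F] {q : ℕ}

theorem pow_pow_mod_six (hcard : Fintype.card F = q ^ 6) (u : F) (n : ℕ) :
    u ^ q ^ (n % 6) = u ^ q ^ n := by
  conv_rhs => rw [← Nat.mod_add_div n 6, pow_add, pow_mul q 6, ← hcard, pow_mul,
    FiniteField.pow_card_pow]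

theorem pow_pow_pow_pow (hcard : Fintype.card F = q ^ 6) (u : F) (i j : ℕ) :
    (u ^ q ^ i) ^ q ^ j = u ^ q ^ ((i + j) % 6) := by
  rw [pow_pow_mod_six hcard, ← pow_mul, ← pow_add]

theorem pow_pow_pow (hcard : Fintype.card F = q ^ 6) (u : F) (i : ℕ) :
    (u ^ q ^ i) ^ q = u ^ q ^ ((i + 1) % 6) := by
  rw [pow_pow_mod_six hcard, ← pow_mul, ← pow_succ]

theorem pow_pow_norm_exponent (hcard : Fintype.card F = q ^ 6) (x : F) (k : ℕ) :
    (x ^ q ^ k) ^ (q ^ 5 + q ^ 4 + q ^ 3 + q ^ 2 + q + 1) =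
      x ^ (q ^ 5 + q ^ 4 + q ^ 3 + q ^ 2 + q + 1) := by
  have hfix : (x ^ (q ^ 5 + q ^ 4 + q ^ 3 + q ^ 2 + q + 1)) ^ q =
      x ^ (q ^ 5 + q ^ 4 + q ^ 3 + q ^ 2 + q + 1) := by
    calc _ = x ^ q ^ 6 * x ^ (q ^ 5 + q ^ 4 + q ^ 3 + q ^ 2 + q) := by
          rw [← pow_mul, ← pow_add]; ring_nf
      _ = _ := by rw [← hcard, FiniteField.pow_card, ← pow_succ']
  rw [← pow_mul, mul_comm, pow_mul]
  induction k with
  | zero => rw [pow_zero, pow_one]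
  | succ k ih => rw [pow_succ q k, pow_mul, ih, hfix]

theorem norm_eq_one_of_mul_pow_eq (hcard : Fintype.card F = q ^ 6) {B d : F} (hB : B ≠ 0)
    {i j : ℕ} (h : (B * d) ^ q ^ i = B ^ q ^ j) :
    d ^ (q ^ 5 + q ^ 4 + q ^ 3 + q ^ 2 + q + 1) = 1 := by
  have := congrArg (· ^ (q ^ 5 + q ^ 4 + q ^ 3 + q ^ 2 + q + 1)) h
  simp only [pow_pow_norm_exponent hcard, mul_pow] at this
  exact (mul_eq_left₀ (pow_ne_zero _ hB)).mp this

end CardPowSix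

theorem forall_apply_eq_of_setOf_eq_graph {α β γ : Type*} {f : α → β} {g : α → γ} {L : β → γ}
    (h : {p : β × γ | ∃ x, p = (f x, g x)} = {p | ∃ y, p = (y, L y)}) (x : α) :
    g x = L (f x) := by
  obtain ⟨y, hy⟩ : (f x, g x) ∈ {p : β × γ | ∃ y, p = (y, L y)} := h ▸ ⟨x, rfl⟩
  rw [Prod.mk.injEq] at hy
  rw [hy.1, hy.2]

theorem ne_zero_of_mem_frakC {q : ℕ} (hq : q ≠ 0) {F : Type*} [Field F] {c : F}
    (hc : c ∈ frakC q F) : c ≠ 0 := by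
  rintro rfl
  simpa [F1, hq] using hc.2.1

section ScatteredPoly

variable {F : Type*} [Field F] {q : ℕ}

def scatteredPoly (q : ℕ) (c x : F) : F := x ^ q + x ^ q ^ 3 + c * x ^ q ^ 5

theorem scatteredPoly_add {p e : ℕ} [ExpChar F p] (hq : q = p ^ e) (c u v : F) :
    scatteredPoly q c (u + v) = scatteredPoly q c u + scatteredPoly q c v := by
  simp only [scatteredPoly, add_pow_of_eq_expChar_pow hq, add_pow_pow_of_eq_expChar_pow hq]
  ring

theorem scatteredPoly_mul (c a x : F) :
    scatteredPoly q c (a * x) =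
      a ^ q * x ^ q + a ^ q ^ 3 * x ^ q ^ 3 + c * a ^ q ^ 5 * x ^ q ^ 5 := by
  simp only [scatteredPoly, mul_pow]
  ring

end ScatteredPoly

section Families

variable {F : Type*} [Field F] [Fintype F] {e q : ℕ} {c A B C D d : F}

theorem eq_zero_of_forall_eq_scatteredPoly_monomial {p : ℕ} [ExpChar F p] (hq1 : 1 < q)
    (hq : q = p ^ e) (hcard : Fintype.card F = q ^ 6) {s : ℕ} (hs : s = 1 ∨ s = 5)
    (h : ∀ y, C * y + D * y ^ q ^ s = scatteredPoly q c (A * y + B * y ^ q ^ s)) :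
    A = 0 ∧ B = 0 := by
  rcases hs with rfl | rfl
  · obtain ⟨-, -, hB, hA, -, -⟩ := eq_zero_of_forall_linearized_six_eq_zero hq1 hcard
      (a₀ := c * B ^ q ^ 5 - C) (a₁ := A ^ q - D) (a₂ := B ^ q) (a₃ := A ^ q ^ 3)
      (a₄ := B ^ q ^ 3) (a₅ := c * A ^ q ^ 5) fun y => by
        have hy := h y
        simp only [scatteredPoly_add hq, scatteredPoly_mul, pow_pow_pow hcard,
          pow_pow_pow_pow hcard, Nat.reduceAdd, Nat.reduceMod] at hy
        linear_combination -hy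
    exact ⟨eq_zero_of_pow_eq_zero hA, eq_zero_of_pow_eq_zero hB⟩
  · obtain ⟨-, hA, hB, -, -, -⟩ := eq_zero_of_forall_linearized_six_eq_zero hq1 hcard
      (a₀ := B ^ q - C) (a₁ := A ^ q) (a₂ := B ^ q ^ 3) (a₃ := A ^ q ^ 3)
      (a₄ := c * B ^ q ^ 5) (a₅ := c * A ^ q ^ 5 - D) fun y => by
        have hy := h y
        simp only [scatteredPoly_add hq, scatteredPoly_mul, pow_pow_pow hcard,
          pow_pow_pow_pow hcard, Nat.reduceAdd, Nat.reduceMod] at hy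
        linear_combination -hy
    exact ⟨eq_zero_of_pow_eq_zero hA, eq_zero_of_pow_eq_zero hB⟩

theorem eq_zero_of_forall_eq_scatteredPoly_binomial_opposite [CharP F 2] (hq1 : 1 < q)
    (hq : q = 2 ^ e) (hcard : Fintype.card F = q ^ 6) {s : ℕ} (hs : s = 1 ∨ s = 5)
    (h : ∀ y, C * y + D * (d * y ^ q ^ s + y ^ q ^ (6 - s)) =
      scatteredPoly q c (A * y + B * (d * y ^ q ^ s + y ^ q ^ (6 - s)))) :
    A = 0 ∧ D = 0 ∧ (B = 0 ∨ d ^ (q ^ 5 + q ^ 4 + q ^ 3 + q ^ 2 + q + 1) = 1) := by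
  have hq0 : q ≠ 0 := by omega
  rcases hs with rfl | rfl
  · obtain ⟨-, -, hBd, hA, -, hD⟩ := eq_zero_of_forall_linearized_six_eq_zero hq1 hcard
      (a₀ := B ^ q + c * B ^ q ^ 5 * d ^ q ^ 5 - C) (a₁ := A ^ q - D * d)
      (a₂ := B ^ q * d ^ q + B ^ q ^ 3) (a₃ := A ^ q ^ 3)
      (a₄ := B ^ q ^ 3 * d ^ q ^ 3 + c * B ^ q ^ 5) (a₅ := c * A ^ q ^ 5 - D) fun y => by
        have hy := h y
        simp only [mul_add, ← mul_assoc, scatteredPoly_add hq, scatteredPoly_mul, mul_pow,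
          pow_pow_pow hcard, pow_pow_pow_pow hcard, Nat.reduceAdd, Nat.reduceSub,
          Nat.reduceMod] at hy
        linear_combination -hy
    have hA0 := eq_zero_of_pow_eq_zero hA
    refine ⟨hA0, by simpa [hA0, hq0] using hD, or_iff_not_imp_left.mpr fun hB =>
      norm_eq_one_of_mul_pow_eq hcard hB (i := 1) (j := 3) ?_⟩
    rw [pow_one, mul_pow]
    exact CharTwo.add_eq_zero.mp hBd
  · obtain ⟨-, hD, hBd, hA, -, -⟩ := eq_zero_of_forall_linearized_six_eq_zero hq1 hcard
      (a₀ := B ^ q * d ^ q + c * B ^ q ^ 5 - C) (a₁ := A ^ q - D)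
      (a₂ := B ^ q + B ^ q ^ 3 * d ^ q ^ 3) (a₃ := A ^ q ^ 3)
      (a₄ := B ^ q ^ 3 + c * B ^ q ^ 5 * d ^ q ^ 5) (a₅ := c * A ^ q ^ 5 - D * d) fun y => by
        have hy := h y
        simp only [mul_add, ← mul_assoc, scatteredPoly_add hq, scatteredPoly_mul, mul_pow,
          pow_pow_pow hcard, pow_pow_pow_pow hcard, Nat.reduceAdd, Nat.reduceSub,
          Nat.reduceMod] at hy
        linear_combination -hy
    have hA0 := eq_zero_of_pow_eq_zero hA
    refine ⟨hA0, by simpa [hA0, hq0] using hD, or_iff_not_imp_left.mpr fun hB =>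
      norm_eq_one_of_mul_pow_eq hcard hB (i := 3) (j := 1) ?_⟩
    rw [pow_one, mul_pow]
    exact (CharTwo.add_eq_zero.mp hBd).symm

theorem eq_zero_of_forall_eq_scatteredPoly_binomial_half {p : ℕ} [ExpChar F p] (hq1 : 1 < q)
    (hq : q = p ^ e) (hcard : Fintype.card F = q ^ 6) (hc : c ≠ 0) (hd : d ≠ 0) {s : ℕ}
    (hs : s = 1 ∨ s = 2 ∨ s = 4 ∨ s = 5)
    (h : ∀ y, C * y + D * (d * y ^ q ^ s + y ^ q ^ (s + 3)) =
      scatteredPoly q c (A * y + B * (d * y ^ q ^ s + y ^ q ^ (s + 3)))) :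
    A = 0 ∧ B = 0 := by
  have hq0 : q ≠ 0 := by omega
  simp_rw [← pow_pow_mod_six hcard _ (s + 3)] at h
  rcases hs with rfl | rfl | rfl | rfl
  · obtain ⟨-, -, hB, hA, -, -⟩ := eq_zero_of_forall_linearized_six_eq_zero hq1 hcard
      (a₀ := c * B ^ q ^ 5 * d ^ q ^ 5 - C) (a₁ := A ^ q + B ^ q ^ 3 - D * d)
      (a₂ := B ^ q * d ^ q) (a₃ := A ^ q ^ 3 + c * B ^ q ^ 5)
      (a₄ := B ^ q ^ 3 * d ^ q ^ 3 - D) (a₅ := B ^ q + c * A ^ q ^ 5) fun y => by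
        have hy := h y
        simp only [mul_add, ← mul_assoc, scatteredPoly_add hq, scatteredPoly_mul, mul_pow,
          pow_pow_pow hcard, pow_pow_pow_pow hcard, Nat.reduceAdd, Nat.reduceMod] at hy
        linear_combination -hy
    have hB0 : B = 0 := by simpa [hd, hq0] using hB
    exact ⟨by simpa [hB0, hq0] using hA, hB0⟩
  · obtain ⟨-, -, -, hA, hB, -⟩ := eq_zero_of_forall_linearized_six_eq_zero hq1 hcard
      (a₀ := B ^ q - C) (a₁ := A ^ q + c * B ^ q ^ 5 * d ^ q ^ 5)
      (a₂ := B ^ q ^ 3 - D * d) (a₃ := B ^ q * d ^ q + A ^ q ^ 3)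
      (a₄ := c * B ^ q ^ 5) (a₅ := B ^ q ^ 3 * d ^ q ^ 3 + c * A ^ q ^ 5 - D) fun y => by
        have hy := h y
        simp only [mul_add, ← mul_assoc, scatteredPoly_add hq, scatteredPoly_mul, mul_pow,
          pow_pow_pow hcard, pow_pow_pow_pow hcard, Nat.reduceAdd, Nat.reduceMod] at hy
        linear_combination -hy
    have hB0 : B = 0 := by simpa [hc, hq0] using hB
    exact ⟨by simpa [hB0, hq0] using hA, hB0⟩
  · obtain ⟨-, -, hB, hA, -, -⟩ := eq_zero_of_forall_linearized_six_eq_zero hq1 hcard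
      (a₀ := c * B ^ q ^ 5 - C) (a₁ := A ^ q + B ^ q ^ 3 * d ^ q ^ 3 - D)
      (a₂ := B ^ q) (a₃ := A ^ q ^ 3 + c * B ^ q ^ 5 * d ^ q ^ 5)
      (a₄ := B ^ q ^ 3 - D * d) (a₅ := B ^ q * d ^ q + c * A ^ q ^ 5) fun y => by
        have hy := h y
        simp only [mul_add, ← mul_assoc, scatteredPoly_add hq, scatteredPoly_mul, mul_pow,
          pow_pow_pow hcard, pow_pow_pow_pow hcard, Nat.reduceAdd, Nat.reduceMod] at hy
        linear_combination -hy
    have hB0 : B = 0 := eq_zero_of_pow_eq_zero hB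
    exact ⟨by simpa [hB0, hq0] using hA, hB0⟩
  · obtain ⟨-, -, -, hA, hB, -⟩ := eq_zero_of_forall_linearized_six_eq_zero hq1 hcard
      (a₀ := B ^ q * d ^ q - C) (a₁ := A ^ q + c * B ^ q ^ 5)
      (a₂ := B ^ q ^ 3 * d ^ q ^ 3 - D) (a₃ := B ^ q + A ^ q ^ 3)
      (a₄ := c * B ^ q ^ 5 * d ^ q ^ 5) (a₅ := B ^ q ^ 3 + c * A ^ q ^ 5 - D * d) fun y => by
        have hy := h y
        simp only [mul_add, ← mul_assoc, scatteredPoly_add hq, scatteredPoly_mul, mul_pow,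
          pow_pow_pow hcard, pow_pow_pow_pow hcard, Nat.reduceAdd, Nat.reduceMod] at hy
        linear_combination -hy
    have hB0 : B = 0 := by simpa [hc, hd, hq0] using hB
    exact ⟨by simpa [hB0, hq0] using hA, hB0⟩

end Families

theorem statement19 :
    ∃ Q : ℕ, ∀ (e q : ℕ), 1 ≤ e → q = 2 ^ e → Q ≤ q →
      ∀ (F : Type) [Field F] [Fintype F], Fintype.card F = q ^ 6 →
        ∀ c ∈ frakC q F, ∀ ρ : F ≃+* F, ∀ A B C D : F, A * D - B * C ≠ 0 →
          (∀ s ∈ ({1, 5} : Set ℕ),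
            {p : F × F | ∃ x : F,
                p = (A * ρ x + B * (ρ x) ^ (q ^ s), C * ρ x + D * (ρ x) ^ (q ^ s))} ≠
              {p : F × F | ∃ x : F, p = (x, x ^ q + x ^ (q ^ 3) + c * x ^ (q ^ 5))}) ∧
          (∀ s ∈ ({1, 5} : Set ℕ), ∀ δ : F,
            δ ^ (q ^ 5 + q ^ 4 + q ^ 3 + q ^ 2 + q + 1) ≠ 0 →
            δ ^ (q ^ 5 + q ^ 4 + q ^ 3 + q ^ 2 + q + 1) ≠ 1 →
            {p : F × F | ∃ x : F,
                p = (A * ρ x + B * ρ (δ * x ^ (q ^ s) + x ^ (q ^ (6 - s))),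
                  C * ρ x + D * ρ (δ * x ^ (q ^ s) + x ^ (q ^ (6 - s))))} ≠
              {p : F × F | ∃ x : F, p = (x, x ^ q + x ^ (q ^ 3) + c * x ^ (q ^ 5))}) ∧
          (∀ s ∈ ({1, 2, 4, 5} : Set ℕ), ∀ δ : F,
            δ ^ (q ^ 3 + 1) ≠ 0 → δ ^ (q ^ 3 + 1) ≠ 1 →
            {p : F × F | ∃ x : F,
                p = (A * ρ x + B * ρ (δ * x ^ (q ^ s) + x ^ (q ^ (s + 3))),
                  C * ρ x + D * ρ (δ * x ^ (q ^ s) + x ^ (q ^ (s + 3))))} ≠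
              {p : F × F | ∃ x : F, p = (x, x ^ q + x ^ (q ^ 3) + c * x ^ (q ^ 5))}) := by
  refine ⟨2, fun e q he hqe hQ F _ _ hcard c hc ρ A B C D hdet => ?_⟩
  have : Fact (Nat.Prime 2) := ⟨Nat.prime_two⟩
  have : CharP F 2 := charP_of_card_eq_prime_pow (f := e * 6) (by rw [hcard, hqe, pow_mul])
  have hq1 : 1 < q := hQ
  have graph {f g : F → F} (heq : {p : F × F | ∃ x, p = (f x, g x)} =
      {p | ∃ x, p = (x, scatteredPoly q c x)}) (y : F) :=
    forall_apply_eq_of_setOf_eq_graph heq (ρ.symm y)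
  refine ⟨fun s hs heq => ?_, fun s hs δ _ hδ heq => ?_, fun s hs δ hδ _ heq => ?_⟩
  · obtain ⟨rfl, rfl⟩ := eq_zero_of_forall_eq_scatteredPoly_monomial hq1 hqe hcard hs
      fun y => by simpa only [RingEquiv.apply_symm_apply] using graph heq y
    simp at hdet
  · obtain ⟨rfl, rfl, hB | hN⟩ := eq_zero_of_forall_eq_scatteredPoly_binomial_opposite hq1 hqe
      hcard hs fun y => by
        simpa only [RingEquiv.apply_symm_apply, map_add, map_mul, map_pow] using graph heq y
    · simp [hB] at hdet
    · exact hδ (by simpa [← map_pow] using hN)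
  · have hδ0 : ρ δ ≠ 0 := by simpa using fun h : δ = 0 => hδ (by simp [h])
    obtain ⟨rfl, rfl⟩ := eq_zero_of_forall_eq_scatteredPoly_binomial_half hq1 hqe hcard
      (ne_zero_of_mem_frakC (by omega) hc) hδ0 hs fun y => by
        simpa only [RingEquiv.apply_symm_apply, map_add, map_mul, map_pow] using graph heq y
    simp at hdet
end
end
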